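/- arXiv:2111.03116 — 11 statements merged into one kernel-verified Lean document; each statement's English description precedes it below -/
import Mathlib

section
/- Let H be an n×n Hermitian matrix and V an n×n unitary matrix such that the work operator W = H − V†HV commutes with H. Then for every real s, e^{iHs/2} e^{−i V†HV s} e^{iHs/2} = e^{iWs}. Consequently, for any density matrix ρ diagonal in the eigenbasis of H, Tr[e^{iHs/2} e^{−iV†HVs} e^{iHs/2} ρ] = Tr[e^{iWs} ρ], i.e., the characteristic function of the work quasi-distribution equals the characteristic function of the work-operator distribution for an incoherent work operator. -/
open Matrix NormedSpace
open scoped ComplexOrder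

/-! If `H` commutes with `W = H - V†HV`, it also commutes with `V†HV = H - W`, so the three
exponentials commute and multiply to the exponential of the sum of their exponents. -/

theorem commute_of_commute_sub_left {R : Type*} [Ring R] {a b : R} (h : Commute (a - b) a) :
    Commute a b := by
  simpa using ((Commute.refl a).sub_left h).symm

theorem Matrix.exp_half_smul_mul_exp_neg_smul_mul_exp_half_smul {m 𝕜 : Type*} [Fintype m]
    [DecidableEq m] [RCLike 𝕜] {A B : Matrix m m 𝕜} (h : Commute A B) (t : 𝕜) :
    exp ((t / 2) • A) * exp ((-t) • B) * exp ((t / 2) • A) = exp (t • (A - B)) := by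
  have hsplit : t • (A - B) = (t / 2) • A + ((-t) • B + (t / 2) • A) := by module
  have hA : Commute ((t / 2) • A) ((-t) • B + (t / 2) • A) :=
    ((h.smul_left _).smul_right _).add_right (((Commute.refl A).smul_left _).smul_right _)
  have hB : Commute ((-t) • B) ((t / 2) • A) := (h.symm.smul_left _).smul_right _
  rw [hsplit, exp_add_of_commute _ _ hA, exp_add_of_commute _ _ hB, mul_assoc]

theorem stmt_1_general (n : ℕ) (H V ρ : Matrix (Fin n) (Fin n) ℂ)
    (hcomm : Commute (H - Vᴴ * H * V) H) :
    ∀ s : ℝ,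
      (NormedSpace.exp ((Complex.I * s / 2) • H) *
          NormedSpace.exp ((-(Complex.I * s)) • (Vᴴ * H * V)) *
          NormedSpace.exp ((Complex.I * s / 2) • H)
        = NormedSpace.exp ((Complex.I * s) • (H - Vᴴ * H * V)))
      ∧ (NormedSpace.exp ((Complex.I * s / 2) • H) *
          NormedSpace.exp ((-(Complex.I * s)) • (Vᴴ * H * V)) *
          NormedSpace.exp ((Complex.I * s / 2) • H) * ρ).trace
        = (NormedSpace.exp ((Complex.I * s) • (H - Vᴴ * H * V)) * ρ).trace := by
  intro s
  have hexp := exp_half_smul_mul_exp_neg_smul_mul_exp_half_smul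
    (commute_of_commute_sub_left hcomm) (Complex.I * s)
  exact ⟨hexp, by rw [hexp]⟩

/-- If the work operator `W = H - V†HV` commutes with `H`, then
`e^{iHs/2} e^{-iV†HVs} e^{iHs/2} = e^{iWs}` for every real `s`, and consequently for any
density matrix `ρ` diagonal in the eigenbasis of `H` (i.e. commuting with `H`),
the characteristic function of the work quasi-distribution equals `Tr[e^{iWs} ρ]`. -/
theorem stmt_1 (n : ℕ) (H V ρ : Matrix (Fin n) (Fin n) ℂ)
    (hH : H.IsHermitian) (hV : V ∈ Matrix.unitaryGroup (Fin n) ℂ)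
    (hcomm : Commute (H - Vᴴ * H * V) H)
    (hρ : ρ.PosSemidef) (hρtr : ρ.trace = 1) (hρH : Commute ρ H) :
    ∀ s : ℝ,
      (NormedSpace.exp ((Complex.I * s / 2) • H) *
          NormedSpace.exp ((-(Complex.I * s)) • (Vᴴ * H * V)) *
          NormedSpace.exp ((Complex.I * s / 2) • H)
        = NormedSpace.exp ((Complex.I * s) • (H - Vᴴ * H * V)))
      ∧ (NormedSpace.exp ((Complex.I * s / 2) • H) *
          NormedSpace.exp ((-(Complex.I * s)) • (Vᴴ * H * V)) *
          NormedSpace.exp ((Complex.I * s / 2) • H) * ρ).trace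
        = (NormedSpace.exp ((Complex.I * s) • (H - Vᴴ * H * V)) * ρ).trace :=
  stmt_1_general n H V ρ hcomm
end

section
/- Let μ be a probability measure on ℝ with finite second moment, mean m and variance σ², and let λ(ω) = ∫ e^{iωE} dμ(E) denote its characteristic function. Then for every real ω, |λ(ω)|² ≥ 1 − σ² ω². -/
/-!
Multiplying `λ(ω)` by the phase `e^{-iωm}`, `m` the mean, does not change its modulus and turns
its real part into `∫ cos (ω (E - m)) dμ`, which is at least `1 - σ²ω²/2` because
`cos x ≥ 1 - x²/2`. So `|λ(ω)| ≥ 1 - σ²ω²/2`, and squaring gives `|λ(ω)|² ≥ 1 - σ²ω²`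
(trivially when the right-hand side is negative).
-/

open MeasureTheory ProbabilityTheory Complex
open scoped RealInnerProductSpace

lemma integrable_cexp_ofReal_mul_I {Ω : Type*} {_ : MeasurableSpace Ω} (μ : Measure Ω)
    [IsFiniteMeasure μ] {f : Ω → ℝ} (hf : AEMeasurable f μ) :
    Integrable (fun x ↦ cexp (f x * I)) μ :=
  .of_bound (by fun_prop) 1 (.of_forall fun x ↦ (norm_exp_ofReal_mul_I _).le)

lemma integral_cos_inner_sub_le_norm_charFun {E : Type*} [SeminormedAddCommGroup E]
    [InnerProductSpace ℝ E] {_ : MeasurableSpace E} [OpensMeasurableSpace E]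
    (μ : Measure E) [IsFiniteMeasure μ] (t : E) (c : ℝ) :
    ∫ x, Real.cos (⟪x, t⟫ - c) ∂μ ≤ ‖charFun μ t‖ := by
  have hrot : cexp (-c * I) * charFun μ t = ∫ x, cexp ((⟪x, t⟫ - c : ℝ) * I) ∂μ := by
    rw [charFun_apply, ← integral_const_mul]
    congr with x
    rw [← Complex.exp_add]
    push_cast
    ring_nf
  calc ∫ x, Real.cos (⟪x, t⟫ - c) ∂μ = (cexp (-c * I) * charFun μ t).re := by
        rw [hrot, ← RCLike.re_to_complex,
          ← integral_re (integrable_cexp_ofReal_mul_I μ (by fun_prop))]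
        simp_rw [RCLike.re_to_complex, exp_ofReal_mul_I_re]
    _ ≤ ‖cexp (-c * I) * charFun μ t‖ := re_le_norm _
    _ = ‖charFun μ t‖ := by
        rw [norm_mul, ← ofReal_neg, norm_exp_ofReal_mul_I, one_mul]

lemma one_sub_mul_variance_le_integral_cos {Ω : Type*} {_ : MeasurableSpace Ω}
    {μ : Measure Ω} [IsProbabilityMeasure μ] {X : Ω → ℝ} (hX : MemLp X 2 μ) (t : ℝ) :
    1 - t ^ 2 * Var[X; μ] / 2 ≤ ∫ ω, Real.cos (t * (X ω - μ[X])) ∂μ := by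
  have hquad : Integrable (fun ω ↦ (t * (X ω - μ[X])) ^ 2) μ :=
    (hX.sub (memLp_const _)).const_mul t |>.integrable_sq
  have hcos : Integrable (fun ω ↦ Real.cos (t * (X ω - μ[X]))) μ :=
    .of_bound (by have := hX.aemeasurable; fun_prop) 1
      (.of_forall fun ω ↦ by simpa using Real.abs_cos_le_one _)
  calc 1 - t ^ 2 * Var[X; μ] / 2 = ∫ ω, (1 - (t * (X ω - μ[X])) ^ 2 / 2) ∂μ := by
        rw [integral_sub (integrable_const _) (hquad.div_const _), integral_div]
        simp_rw [mul_pow]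
        rw [integral_const_mul, variance_eq_integral hX.aemeasurable]
        simp
    _ ≤ ∫ ω, Real.cos (t * (X ω - μ[X])) ∂μ :=
        integral_mono ((integrable_const _).sub (hquad.div_const _)) hcos
          fun ω ↦ Real.one_sub_sq_div_two_le_cos

lemma one_sub_le_sq_of_one_sub_half_le {a L : ℝ} (hL : 0 ≤ L) (h : 1 - a / 2 ≤ L) :
    1 - a ≤ L ^ 2 := by
  nlinarith [sq_nonneg (a / 2)]

/-- For a probability measure `μ` on `ℝ` with finite second moment and
variance `σ²`, its characteristic function `λ(ω) = ∫ e^{iωE} dμ(E)` satisfies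
`|λ(ω)|² ≥ 1 - σ² ω²` for every real `ω`. -/
theorem stmt_3 (μ : Measure ℝ) [IsProbabilityMeasure μ]
    (h2 : Integrable (fun E => E ^ 2) μ) (ω : ℝ) :
    1 - ((∫ E, E ^ 2 ∂μ) - (∫ E, E ∂μ) ^ 2) * ω ^ 2
      ≤ ‖∫ E, Complex.exp (Complex.I * ω * E) ∂μ‖ ^ 2 := by
  have hid : MemLp id 2 μ := (memLp_two_iff_integrable_sq aestronglyMeasurable_id).2 h2
  have hvar : Var[id; μ] = (∫ E, E ^ 2 ∂μ) - (∫ E, E ∂μ) ^ 2 := by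
    simp [variance_eq_sub hid]
  have hchar : ∫ E, cexp (I * ω * E) ∂μ = charFun μ ω := by
    simp_rw [charFun_apply_real, mul_comm I, mul_right_comm _ I]
  have hcos : ∫ E, Real.cos (⟪E, ω⟫ - ω * μ[id]) ∂μ
      = ∫ E, Real.cos (ω * (id E - μ[id])) ∂μ := by
    congr with E
    simp [mul_sub]
  refine one_sub_le_sq_of_one_sub_half_le (norm_nonneg _) ?_
  rw [← hvar, hchar, mul_comm]
  calc 1 - ω ^ 2 * Var[id; μ] / 2 ≤ ∫ E, Real.cos (ω * (id E - μ[id])) ∂μ :=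
        one_sub_mul_variance_le_integral_cos hid ω
    _ ≤ ‖charFun μ ω‖ := hcos ▸ integral_cos_inner_sub_le_norm_charFun μ ω _
end

section
/- Let μ and ν be probability measures on ℝ, with μ having finite variance σ_E², and let λ and γ be their characteristic functions. Fix ω > 0 and x ∈ (0, π), and suppose the characteristic-function uncertainty relation |γ(ω)|² + |λ(x/ω)|² ≤ β(x) holds, where β(x) = 2√2 (√2 − √(1 − cos x)) / (1 + cos x). Then σ_E² ≥ (ω²/x²) (1 − β(x) + |γ(ω)|²). -/
/-!
Centering `μ` does not change `‖λ(t)‖`, and the real part of the centered characteristic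
function is `∫ cos (t (E - m)) dμ ≥ 1 - t² σ_E² / 2`. Hence `1 - ‖λ(t)‖² ≤ 2 (1 - ‖λ(t)‖) ≤ t² σ_E²`;
at `t = x / ω` the uncertainty relation bounds the left side from below by
`1 - β(x) + ‖γ(ω)‖²`.
-/

open MeasureTheory Real

/-- The bound function of the characteristic-function uncertainty relation of Rudnicki (2016). -/
noncomputable def rudnickiBeta (x : ℝ) : ℝ :=
  2 * Real.sqrt 2 * (Real.sqrt 2 - Real.sqrt (1 - Real.cos x)) / (1 + Real.cos x)

/-- The characteristic function of a measure on `ℝ`. -/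
noncomputable def charFunction (μ : Measure ℝ) (ω : ℝ) : ℂ :=
  ∫ E, Complex.exp (Complex.I * ω * E) ∂μ

open ProbabilityTheory

lemma charFunction_eq_charFun (μ : Measure ℝ) (t : ℝ) : charFunction μ t = charFun μ t := by
  rw [charFunction, charFun_apply_real]
  congr with E
  ring_nf

lemma re_charFun_eq_integral_cos {μ : Measure ℝ} [IsFiniteMeasure μ] (t : ℝ) :
    (charFun μ t).re = ∫ x, cos (t * x) ∂μ := by
  have h : Integrable (fun x : ℝ ↦ Complex.exp ((t * x : ℝ) * Complex.I)) μ :=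
    (integrable_const (1 : ℝ)).mono' (by fun_prop)
      (ae_of_all _ fun x ↦ (Complex.norm_exp_ofReal_mul_I _).le)
  rw [charFun_apply_real, ← RCLike.re_to_complex, ← integral_re (by exact_mod_cast h)]
  simp_rw [RCLike.re_to_complex]
  congr with x
  exact_mod_cast Complex.exp_ofReal_mul_I_re (t * x)

lemma one_sub_re_charFun_le {μ : Measure ℝ} [IsProbabilityMeasure μ]
    (h2 : Integrable (fun x ↦ x ^ 2) μ) (t : ℝ) :
    1 - (charFun μ t).re ≤ t ^ 2 / 2 * ∫ x, x ^ 2 ∂μ := by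
  have hcos : Integrable (fun x ↦ cos (t * x)) μ :=
    (integrable_const (1 : ℝ)).mono' (by fun_prop) (by simp [abs_cos_le_one])
  calc 1 - (charFun μ t).re = ∫ x, (1 - cos (t * x)) ∂μ := by
        rw [re_charFun_eq_integral_cos, integral_sub (integrable_const 1) hcos]
        simp
    _ ≤ ∫ x, t ^ 2 / 2 * x ^ 2 ∂μ :=
        integral_mono ((integrable_const 1).sub hcos) (h2.const_mul _) fun x ↦ by
          nlinarith [one_sub_sq_div_two_le_cos (x := t * x)]
    _ = t ^ 2 / 2 * ∫ x, x ^ 2 ∂μ := integral_const_mul _ _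

lemma one_sub_norm_charFun_le_variance {μ : Measure ℝ} [IsProbabilityMeasure μ]
    (h2 : MemLp id 2 μ) (t : ℝ) :
    1 - ‖charFun μ t‖ ≤ t ^ 2 / 2 * Var[id; μ] := by
  set ν := μ.map (· + -μ[id])
  have : IsProbabilityMeasure ν := Measure.isProbabilityMeasure_map (by fun_prop)
  have hnorm : ‖charFun ν t‖ = ‖charFun μ t‖ := by
    rw [charFun_map_add_const, norm_mul, Complex.norm_exp_ofReal_mul_I, mul_one]
  have hν2 : Integrable (fun x ↦ x ^ 2) ν := by
    rw [integrable_map_measure (by fun_prop) (by fun_prop)]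
    exact (h2.add (memLp_const _)).integrable_sq
  have hvar : ∫ x, x ^ 2 ∂ν = Var[id; μ] := by
    rw [variance_eq_integral aemeasurable_id, integral_map (by fun_prop) (by fun_prop)]
    simp [sub_eq_add_neg]
  calc 1 - ‖charFun μ t‖ ≤ 1 - (charFun ν t).re := by
        rw [← hnorm]; linarith [Complex.re_le_norm (charFun ν t)]
    _ ≤ t ^ 2 / 2 * Var[id; μ] := hvar ▸ one_sub_re_charFun_le hν2 t

lemma one_sub_sq_norm_charFun_le_variance {μ : Measure ℝ} [IsProbabilityMeasure μ]
    (h2 : MemLp id 2 μ) (t : ℝ) :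
    1 - ‖charFun μ t‖ ^ 2 ≤ t ^ 2 * Var[id; μ] := by
  nlinarith [one_sub_norm_charFun_le_variance h2 t, norm_charFun_le_one (μ := μ) t,
    norm_nonneg (charFun μ t)]

theorem stmt_4_general (μ ν : Measure ℝ) [IsProbabilityMeasure μ] [IsProbabilityMeasure ν]
    (h2 : Integrable (fun E => E ^ 2) μ)
    (ω x : ℝ)
    (hChUR : ‖charFunction ν ω‖ ^ 2 + ‖charFunction μ (x / ω)‖ ^ 2 ≤ rudnickiBeta x) :
    (ω ^ 2 / x ^ 2) * (1 - rudnickiBeta x + ‖charFunction ν ω‖ ^ 2)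
      ≤ (∫ E, E ^ 2 ∂μ) - (∫ E, E ∂μ) ^ 2 := by
  have hμ : MemLp id 2 μ := (memLp_two_iff_integrable_sq aestronglyMeasurable_id).2 h2
  have hvar : (∫ E, E ^ 2 ∂μ) - (∫ E, E ∂μ) ^ 2 = Var[id; μ] := (variance_eq_sub hμ).symm
  have hμt := one_sub_sq_norm_charFun_le_variance hμ (x / ω)
  rw [← charFunction_eq_charFun] at hμt
  rw [hvar]
  calc ω ^ 2 / x ^ 2 * (1 - rudnickiBeta x + ‖charFunction ν ω‖ ^ 2)
      ≤ ω ^ 2 / x ^ 2 * ((x / ω) ^ 2 * Var[id; μ]) := by gcongr; linarith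
    _ = (ω * x) ^ 2 / (ω * x) ^ 2 * Var[id; μ] := by ring
    -- the factor is `1`, or `0` (junk division) when `ω * x = 0`
    _ ≤ Var[id; μ] :=
        mul_le_of_le_one_left (variance_nonneg _ _) (div_self_le_one _)

/-- If the characteristic-function uncertainty relation
`|γ(ω)|² + |λ(x/ω)|² ≤ β(x)` holds for some `ω > 0` and `x ∈ (0, π)`, then the variance
of `μ` satisfies `σ_E² ≥ (ω²/x²)(1 - β(x) + |γ(ω)|²)`. -/
theorem stmt_4 (μ ν : Measure ℝ) [IsProbabilityMeasure μ] [IsProbabilityMeasure ν]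
    (h2 : Integrable (fun E => E ^ 2) μ)
    (ω x : ℝ) (hω : 0 < ω) (hx : x ∈ Set.Ioo 0 π)
    (hChUR : ‖charFunction ν ω‖ ^ 2 + ‖charFunction μ (x / ω)‖ ^ 2 ≤ rudnickiBeta x) :
    (ω ^ 2 / x ^ 2) * (1 - rudnickiBeta x + ‖charFunction ν ω‖ ^ 2)
      ≤ (∫ E, E ^ 2 ∂μ) - (∫ E, E ∂μ) ^ 2 :=
  stmt_4_general μ ν h2 ω x hChUR
end

section
/- Let ψ₀, ψ₁ be an orthonormal basis of ℂ², let 0 ≤ p < 1/2, and let σ = p|ψ₀⟩⟨ψ₀| + (1−p)|ψ₁⟩⟨ψ₁|. Let W be a 2×2 Hermitian matrix with Tr W = 0, and set w = Tr[Wσ] and β = ⟨ψ₀|W|ψ₁⟩. Then Tr[W²σ] − w² = 4p(1−p) w² / (1−2p)² + |β|². -/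
open Matrix

/-!
Let `V` be the unitary whose columns are `ψ₀, ψ₁`. Conjugating by `V` turns `σ` into
`diag(p, 1 - p)` and `W` into a traceless Hermitian `A = [[a, β], [β̄, -a]]` with `a` real, without
changing `Tr[W²σ]`, `Tr[Wσ]` or `β`. Then `A² = (a² + |β|²) • 1`, so `Tr[W²σ] = a² + |β|²`, while
`w = Tr[Wσ] = (2p - 1) a`; eliminating `a² = w² / (1 - 2p)²` gives the identity.
-/

namespace Matrix

section Conjugation

variable {n R : Type*} [Fintype n] [DecidableEq n] [CommSemiring R] [StarRing R]

omit [DecidableEq n] in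
theorem trace_mul_conjugate_eq (M U D : Matrix n n R) :
    (M * (U * D * Uᴴ)).trace = (Uᴴ * M * U * D).trace := by
  rw [← Matrix.mul_assoc, trace_mul_comm, ← Matrix.mul_assoc, ← Matrix.mul_assoc]

theorem trace_conjTranspose_mul_mul {U : Matrix n n R} (hU : U * Uᴴ = 1) (M : Matrix n n R) :
    (Uᴴ * M * U).trace = M.trace := by
  rw [trace_mul_cycle, hU, Matrix.one_mul]

theorem conjTranspose_mul_mul_sq {U : Matrix n n R} (hU : U * Uᴴ = 1) (M : Matrix n n R) :
    (Uᴴ * M * U) ^ 2 = Uᴴ * M ^ 2 * U := by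
  rw [sq, sq]
  simp only [Matrix.mul_assoc]
  rw [← Matrix.mul_assoc U, hU, Matrix.one_mul]

theorem transpose_of_conjTranspose_mul_self {ψ : n → n → R}
    (h : ∀ i j, star (ψ i) ⬝ᵥ ψ j = if i = j then 1 else 0) :
    (of ψ)ᵀᴴ * (of ψ)ᵀ = 1 := by
  ext i j
  simpa [mul_apply, dotProduct, one_apply] using h i j

theorem transpose_of_mul_diagonal_mul_conjTranspose (ψ : n → n → R) (d : n → R) :
    (of ψ)ᵀ * diagonal d * (of ψ)ᵀᴴ = ∑ j, d j • vecMulVec (ψ j) (star (ψ j)) := by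
  ext k l
  simp [mul_apply, diagonal, Matrix.sum_apply, vecMulVec_apply, mul_assoc, mul_left_comm (d _)]

omit [DecidableEq n] in
theorem conjTranspose_transpose_of_mul_mul_apply (ψ : n → n → R) (M : Matrix n n R) (i j : n) :
    ((of ψ)ᵀᴴ * M * (of ψ)ᵀ) i j = star (ψ i) ⬝ᵥ (M *ᵥ ψ j) := by
  simp only [mul_apply, conjTranspose_apply, transpose_apply, of_apply, Finset.sum_mul, mul_assoc,
    dotProduct, Pi.star_apply, mulVec, Finset.mul_sum]
  exact Finset.sum_comm

end Conjugation

theorem IsHermitian.exists_eq_of_trace_eq_zero_fin_two {A : Matrix (Fin 2) (Fin 2) ℂ}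
    (hA : A.IsHermitian) (htr : A.trace = 0) :
    ∃ (a : ℝ) (b : ℂ), A = !![(a : ℂ), b; star b, -(a : ℂ)] := by
  have h00 : ((A 0 0).re : ℂ) = A 0 0 := Complex.conj_eq_iff_re.mp (hA.apply 0 0)
  rw [trace_fin_two] at htr
  refine ⟨(A 0 0).re, A 0 1, ?_⟩
  ext i j
  fin_cases i <;> fin_cases j
  · exact h00.symm
  · rfl
  · exact (hA.apply 1 0).symm
  · show A 1 1 = -((A 0 0).re : ℂ)
    rw [h00]
    linear_combination htr

theorem sq_traceless_hermitian_fin_two (a : ℝ) (b : ℂ) :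
    !![(a : ℂ), b; star b, -(a : ℂ)] ^ 2 = ((a ^ 2 + ‖b‖ ^ 2 : ℝ) : ℂ) • 1 := by
  ext i j
  fin_cases i <;> fin_cases j <;>
    simp [sq, mul_apply, Fin.sum_univ_two, Complex.mul_conj', Complex.conj_mul'] <;> ring

theorem trace_traceless_hermitian_mul_diagonal_fin_two (a : ℝ) (b : ℂ) (p : ℝ) :
    (!![(a : ℂ), b; star b, -(a : ℂ)] * diagonal ![(p : ℂ), ((1 - p : ℝ) : ℂ)]).trace
      = ((2 * p - 1) * a : ℝ) := by
  rw [diagonal_fin_two, mul_fin_two, trace_fin_two]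
  simp only [of_apply, cons_val', cons_val_zero, cons_val_one, cons_val_fin_one, empty_val']
  push_cast
  ring

theorem IsHermitian.variance_diagonal_fin_two {A : Matrix (Fin 2) (Fin 2) ℂ}
    (hA : A.IsHermitian) (htr : A.trace = 0) {p : ℝ} (hp : p ≠ 1 / 2) :
    (A ^ 2 * diagonal ![(p : ℂ), ((1 - p : ℝ) : ℂ)]).trace
        - (A * diagonal ![(p : ℂ), ((1 - p : ℝ) : ℂ)]).trace ^ 2
      = ((4 * p * (1 - p) / (1 - 2 * p) ^ 2 : ℝ) : ℂ)
          * (A * diagonal ![(p : ℂ), ((1 - p : ℝ) : ℂ)]).trace ^ 2 + (‖A 0 1‖ ^ 2 : ℂ) := by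
  obtain ⟨a, b, rfl⟩ := hA.exists_eq_of_trace_eq_zero_fin_two htr
  have hp' : (1 - 2 * p : ℂ) ≠ 0 := by
    norm_cast
    contrapose! hp
    linarith
  have hσ : (diagonal ![(p : ℂ), ((1 - p : ℝ) : ℂ)]).trace = 1 := by simp
  have hb : !![(a : ℂ), b; star b, -(a : ℂ)] 0 1 = b := rfl
  rw [sq_traceless_hermitian_fin_two, smul_mul_assoc, Matrix.one_mul, trace_smul, hσ,
    trace_traceless_hermitian_mul_diagonal_fin_two, hb, smul_eq_mul, mul_one]
  push_cast
  field_simp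
  ring

end Matrix

theorem stmt_9_general (ψ : Fin 2 → Fin 2 → ℂ)
    (horth : ∀ i j, star (ψ i) ⬝ᵥ ψ j = if i = j then (1 : ℂ) else 0)
    (p : ℝ) (hp : p < 1 / 2)
    (W : Matrix (Fin 2) (Fin 2) ℂ) (hW : W.IsHermitian) (hWtr : W.trace = 0)
    (σ : Matrix (Fin 2) (Fin 2) ℂ)
    (hσ : σ = (p : ℂ) • vecMulVec (ψ 0) (star (ψ 0))
        + ((1 - p : ℝ) : ℂ) • vecMulVec (ψ 1) (star (ψ 1))) :
    (W ^ 2 * σ).trace - (W * σ).trace ^ 2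
      = ((4 * p * (1 - p) / (1 - 2 * p) ^ 2 : ℝ) : ℂ) * (W * σ).trace ^ 2
        + (‖star (ψ 0) ⬝ᵥ (W *ᵥ ψ 1)‖ ^ 2 : ℂ) := by
  set V := (of ψ)ᵀ
  have hV : V * Vᴴ = 1 := mul_eq_one_comm.mp (transpose_of_conjTranspose_mul_self horth)
  have hσV : σ = V * diagonal ![(p : ℂ), ((1 - p : ℝ) : ℂ)] * Vᴴ := by
    rw [hσ, transpose_of_mul_diagonal_mul_conjTranspose, Fin.sum_univ_two]
    rfl
  have hA : (Vᴴ * W * V).IsHermitian := isHermitian_conjTranspose_mul_mul V hW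
  have hAtr : (Vᴴ * W * V).trace = 0 := by rw [trace_conjTranspose_mul_mul hV, hWtr]
  rw [hσV, trace_mul_conjugate_eq, trace_mul_conjugate_eq, ← conjTranspose_mul_mul_sq hV,
    ← conjTranspose_transpose_of_mul_mul_apply]
  exact hA.variance_diagonal_fin_two hAtr hp.ne

/-- For the control-marginal state `σ = p|ψ₀⟩⟨ψ₀| + (1-p)|ψ₁⟩⟨ψ₁|` of a qubit
(`0 ≤ p < 1/2`) and a traceless Hermitian work operator `W`, with `w = Tr[Wσ]` and
`β = ⟨ψ₀|W|ψ₁⟩`, the variance satisfies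
`Tr[W²σ] - w² = 4p(1-p) w² / (1-2p)² + |β|²`. -/
theorem stmt_9 (ψ : Fin 2 → Fin 2 → ℂ)
    (horth : ∀ i j, star (ψ i) ⬝ᵥ ψ j = if i = j then (1 : ℂ) else 0)
    (p : ℝ) (hp0 : 0 ≤ p) (hp : p < 1 / 2)
    (W : Matrix (Fin 2) (Fin 2) ℂ) (hW : W.IsHermitian) (hWtr : W.trace = 0)
    (σ : Matrix (Fin 2) (Fin 2) ℂ)
    (hσ : σ = (p : ℂ) • vecMulVec (ψ 0) (star (ψ 0))
        + ((1 - p : ℝ) : ℂ) • vecMulVec (ψ 1) (star (ψ 1))) :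
    (W ^ 2 * σ).trace - (W * σ).trace ^ 2
      = ((4 * p * (1 - p) / (1 - 2 * p) ^ 2 : ℝ) : ℂ) * (W * σ).trace ^ 2
        + (‖star (ψ 0) ⬝ᵥ (W *ᵥ ψ 1)‖ ^ 2 : ℂ) :=
  stmt_9_general ψ horth p hp W hW hWtr σ hσ
end

section
/- Let ψ₀, ψ₁ be an orthonormal basis of ℂ², let 0 ≤ p ≤ 1/2, and let σ = p|ψ₀⟩⟨ψ₀| + (1−p)|ψ₁⟩⟨ψ₁|. Let H be a 2×2 positive semidefinite Hermitian matrix with eigenvalues 0 and ω > 0, and set ε_i = ⟨ψ_i|H|ψ_i⟩ for i = 0,1 (so ε₀ + ε₁ = ω). Then the set of attainable works { Tr[(H − V†HV) σ] : V a 2×2 unitary } is exactly the closed interval [−(1−2p) ε₀, (1−2p) ε₁]. In particular the maximal extractable work (the ergotropy of σ) equals (1−2p) ε₁. -/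
open Matrix
open scoped ComplexOrder

/-!
Write `q V = ⟨ψ₀|V†HV|ψ₀⟩`. Because `σ` is diagonal in the basis `ψ` and `H - V†HV` is
traceless, the work done by `V` is `(1 - 2p) (q V - ε₀)`. The matrix `V†HV` is positive
semidefinite of trace `ω`, so its two diagonal entries in the basis `ψ` are nonnegative and sum
to `ω`: hence `q V ∈ [0, ω]`. Conversely `det H = 0` forces the eigenvalues of `H` to be `0` and
`ω`, and a real rotation of the eigenbasis of `H` followed by the change of basis to `ψ` gives,
for any convex weights `a, b`, a unitary with `q V = a λ₀ + b λ₁`. So `q` takes exactly the values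
in `[0, ω]`, and the affine image of this interval is `[-(1 - 2p) ε₀, (1 - 2p) ε₁]` because
`ε₀ + ε₁ = Tr H = ω`.
-/

lemma RCLike.ofReal_sqrt_mul_self {𝕜 : Type*} [RCLike 𝕜] {x : ℝ} (hx : 0 ≤ x) :
    (√x : 𝕜) * √x = x := by
  rw [← RCLike.ofReal_mul, Real.mul_self_sqrt hx]

lemma Set.image_mul_sub_Icc_zero {c e ω : ℝ} (hc : 0 ≤ c) (hω : 0 ≤ ω) :
    (fun r => c * (r - e)) '' Set.Icc 0 ω = Set.Icc (-(c * e)) (c * (ω - e)) := by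
  rw [(by fun_prop : Continuous fun r => c * (r - e)).continuousOn.image_Icc_of_monotoneOn hω
    fun x _ y _ hxy => mul_le_mul_of_nonneg_left (by linarith) hc]
  ring_nf

lemma Set.uIcc_eq_Icc_zero_add_of_mul_eq_zero {a b : ℝ} (ha : 0 ≤ a) (hb : 0 ≤ b)
    (hab : a * b = 0) : Set.uIcc a b = Set.Icc 0 (a + b) := by
  rcases mul_eq_zero.mp hab with rfl | rfl
  · simp [Set.uIcc_of_le hb]
  · simp [Set.uIcc_of_ge ha]

namespace Matrix

lemma dotProduct_conjTranspose_mul_mul_mulVec {R n : Type*} [CommSemiring R] [StarRing R]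
    [Fintype n] (V A : Matrix n n R) (x : n → R) :
    star x ⬝ᵥ ((Vᴴ * A * V) *ᵥ x) = star (V *ᵥ x) ⬝ᵥ (A *ᵥ (V *ᵥ x)) := by
  simp only [star_mulVec, dotProduct_mulVec, vecMul_vecMul, mulVec_mulVec, Matrix.mul_assoc]

lemma trace_conjTranspose_mul_mul_of_mem_unitaryGroup {R n : Type*} [CommRing R]
    [StarRing R] [Fintype n] [DecidableEq n] (A : Matrix n n R) {V : Matrix n n R}
    (hV : V ∈ unitaryGroup n R) : (Vᴴ * A * V).trace = A.trace := by
  rw [trace_mul_cycle, ← star_eq_conjTranspose, mem_unitaryGroup_iff.mp hV, one_mul]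

section Orthonormal

variable {R n : Type*} [CommRing R] [StarRing R] [Fintype n] [DecidableEq n] {ψ : n → n → R}

lemma conjTranspose_mul_self_transpose_of
    (hψ : ∀ i j, star (ψ i) ⬝ᵥ ψ j = if i = j then 1 else 0) :
    ((of ψ)ᵀ)ᴴ * (of ψ)ᵀ = 1 := by
  ext i j
  simpa [mul_apply, one_apply, dotProduct] using hψ i j

lemma transpose_of_mem_unitaryGroup
    (hψ : ∀ i j, star (ψ i) ⬝ᵥ ψ j = if i = j then 1 else 0) :
    (of ψ)ᵀ ∈ unitaryGroup n R :=
  mem_unitaryGroup_iff'.mpr (conjTranspose_mul_self_transpose_of hψ)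

lemma conjTranspose_transpose_of_mulVec
    (hψ : ∀ i j, star (ψ i) ⬝ᵥ ψ j = if i = j then 1 else 0) (i : n) :
    ((of ψ)ᵀ)ᴴ *ᵥ ψ i = Pi.single i 1 := by
  ext j
  simpa [mulVec, dotProduct, Pi.single_apply] using hψ j i

lemma sum_vecMulVec_self_star_eq_one
    (hψ : ∀ i j, star (ψ i) ⬝ᵥ ψ j = if i = j then 1 else 0) :
    ∑ i, vecMulVec (ψ i) (star (ψ i)) = 1 := by
  have h := mul_eq_one_comm.mp (conjTranspose_mul_self_transpose_of hψ)
  ext j k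
  simpa [mul_apply, vecMulVec_apply, Matrix.sum_apply] using congrFun (congrFun h j) k

lemma trace_eq_sum_dotProduct_mulVec
    (hψ : ∀ i j, star (ψ i) ⬝ᵥ ψ j = if i = j then 1 else 0) (A : Matrix n n R) :
    A.trace = ∑ i, star (ψ i) ⬝ᵥ (A *ᵥ ψ i) := by
  conv_lhs => rw [← mul_one A, ← sum_vecMulVec_self_star_eq_one hψ]
  simp [Finset.mul_sum, trace_sum, mul_vecMulVec, dotProduct_comm]

end Orthonormal

section RCLike

variable {𝕜 n : Type*} [RCLike 𝕜] [Fintype n] [DecidableEq n] {ψ : n → n → 𝕜}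

lemma PosSemidef.dotProduct_mulVec_le_trace
    (hψ : ∀ i j, star (ψ i) ⬝ᵥ ψ j = if i = j then 1 else 0) {B : Matrix n n 𝕜}
    (hB : B.PosSemidef) (i : n) : star (ψ i) ⬝ᵥ (B *ᵥ ψ i) ≤ B.trace := by
  rw [trace_eq_sum_dotProduct_mulVec hψ]
  exact Finset.single_le_sum (fun j _ => hB.dotProduct_mulVec_nonneg (ψ j)) (Finset.mem_univ i)

lemma PosSemidef.exists_dotProduct_conj_mulVec_eq_ofReal_mem_Icc
    (hψ : ∀ i j, star (ψ i) ⬝ᵥ ψ j = if i = j then 1 else 0) {H : Matrix n n 𝕜}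
    (hH : H.PosSemidef) {ω : ℝ} (htr : H.trace = ω) {V : Matrix n n 𝕜}
    (hV : V ∈ unitaryGroup n 𝕜) (i : n) :
    ∃ r ∈ Set.Icc 0 ω, star (ψ i) ⬝ᵥ ((Vᴴ * H * V) *ᵥ ψ i) = r := by
  have hB := hH.conjTranspose_mul_mul_same V
  obtain ⟨r, hr0, hr⟩ := RCLike.nonneg_iff_exists_ofReal.mp (hB.dotProduct_mulVec_nonneg (ψ i))
  have hle := PosSemidef.dotProduct_mulVec_le_trace hψ hB i
  rw [trace_conjTranspose_mul_mul_of_mem_unitaryGroup H hV, htr, ← hr] at hle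
  exact ⟨r, ⟨hr0, RCLike.ofReal_le_ofReal.mp hle⟩, hr.symm⟩

end RCLike

section Qubit

variable {𝕜 : Type*} [RCLike 𝕜]

noncomputable def rotationOfWeights (a b : ℝ) : Matrix (Fin 2) (Fin 2) 𝕜 :=
  !![(√a : 𝕜), -(√b : 𝕜); (√b : 𝕜), (√a : 𝕜)]

lemma rotationOfWeights_mem_unitaryGroup {a b : ℝ} (ha : 0 ≤ a) (hb : 0 ≤ b) (hab : a + b = 1) :
    rotationOfWeights a b ∈ unitaryGroup (Fin 2) 𝕜 := by
  rw [mem_unitaryGroup_iff', star_eq_conjTranspose, rotationOfWeights]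
  ext i j
  fin_cases i <;> fin_cases j <;>
    simp [mul_apply, Fin.sum_univ_two, RCLike.ofReal_sqrt_mul_self, ha, hb, mul_comm] <;>
    exact_mod_cast (by linarith)

lemma rotationOfWeights_mulVec_single_zero (a b : ℝ) :
    rotationOfWeights a b *ᵥ Pi.single 0 1 = ![(√a : 𝕜), (√b : 𝕜)] := by
  ext i
  fin_cases i <;> simp [rotationOfWeights]

lemma IsHermitian.exists_unitary_dotProduct_conj_mulVec_eq {A : Matrix (Fin 2) (Fin 2) 𝕜}
    (hA : A.IsHermitian) {ψ : Fin 2 → Fin 2 → 𝕜}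
    (hψ : ∀ i j, star (ψ i) ⬝ᵥ ψ j = if i = j then 1 else 0) {r : ℝ}
    (hr : r ∈ Set.uIcc (hA.eigenvalues 0) (hA.eigenvalues 1)) :
    ∃ V ∈ unitaryGroup (Fin 2) 𝕜, star (ψ 0) ⬝ᵥ ((Vᴴ * A * V) *ᵥ ψ 0) = r := by
  rw [← segment_eq_uIcc] at hr
  obtain ⟨a, b, ha, hb, hab, rfl⟩ := hr
  set U : Matrix (Fin 2) (Fin 2) 𝕜 := (hA.eigenvectorUnitary : Matrix (Fin 2) (Fin 2) 𝕜)
  have hdiag : Uᴴ * A * U = diagonal (RCLike.ofReal ∘ hA.eigenvalues) := by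
    rw [← hA.conjStarAlgAut_star_eigenvectorUnitary, Unitary.conjStarAlgAut_star_apply]
    rfl
  -- `V` maps `ψ 0` to `√a • e₀ + √b • e₁`, where `e` is the eigenbasis of `A`.
  refine ⟨U * rotationOfWeights a b * ((of ψ)ᵀ)ᴴ,
    mul_mem (mul_mem hA.eigenvectorUnitary.2 (rotationOfWeights_mem_unitaryGroup ha hb hab))
      (by simpa [star_eq_conjTranspose] using Unitary.star_mem (transpose_of_mem_unitaryGroup hψ)),
    ?_⟩
  rw [dotProduct_conjTranspose_mul_mul_mulVec, ← mulVec_mulVec, ← mulVec_mulVec,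
    conjTranspose_transpose_of_mulVec hψ, rotationOfWeights_mulVec_single_zero,
    ← dotProduct_conjTranspose_mul_mul_mulVec, hdiag]
  simp only [dotProduct, Fin.sum_univ_two, mulVec_diagonal, Pi.star_apply, Function.comp_apply,
    RCLike.star_def, RCLike.conj_ofReal, Matrix.cons_val_zero, Matrix.cons_val_one, smul_eq_mul]
  push_cast
  linear_combination (hA.eigenvalues 0 : 𝕜) * RCLike.ofReal_sqrt_mul_self (𝕜 := 𝕜) ha
    + (hA.eigenvalues 1 : 𝕜) * RCLike.ofReal_sqrt_mul_self (𝕜 := 𝕜) hb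

lemma PosSemidef.uIcc_eigenvalues_eq_Icc {H : Matrix (Fin 2) (Fin 2) 𝕜} (hH : H.PosSemidef)
    (hdet : H.det = 0) {ω : ℝ} (htr : H.trace = ω) :
    Set.uIcc (hH.1.eigenvalues 0) (hH.1.eigenvalues 1) = Set.Icc 0 ω := by
  have hsum : hH.1.eigenvalues 0 + hH.1.eigenvalues 1 = ω := by
    have := hH.1.trace_eq_sum_eigenvalues
    rw [htr, Fin.sum_univ_two] at this
    exact_mod_cast this.symm
  have hprod : hH.1.eigenvalues 0 * hH.1.eigenvalues 1 = 0 := by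
    have := hH.1.det_eq_prod_eigenvalues
    rw [hdet, Fin.prod_univ_two] at this
    exact_mod_cast this.symm
  rw [Set.uIcc_eq_Icc_zero_add_of_mul_eq_zero (hH.eigenvalues_nonneg 0)
    (hH.eigenvalues_nonneg 1) hprod, hsum]

lemma trace_mul_add_smul_vecMulVec {ψ : Fin 2 → Fin 2 → 𝕜}
    (hψ : ∀ i j, star (ψ i) ⬝ᵥ ψ j = if i = j then 1 else 0) (A : Matrix (Fin 2) (Fin 2) 𝕜)
    (p : 𝕜) :
    (A * (p • vecMulVec (ψ 0) (star (ψ 0)) + (1 - p) • vecMulVec (ψ 1) (star (ψ 1)))).trace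
      = (1 - p) * A.trace - (1 - 2 * p) * (star (ψ 0) ⬝ᵥ (A *ᵥ ψ 0)) := by
  rw [trace_eq_sum_dotProduct_mulVec hψ A, Fin.sum_univ_two]
  simp only [Matrix.mul_add, Matrix.mul_smul, trace_add, trace_smul, mul_vecMulVec,
    trace_vecMulVec, smul_eq_mul, dotProduct_comm (A *ᵥ _)]
  ring

end Qubit

lemma trace_sub_conjTranspose_mul_mul_mul_eq {ψ : Fin 2 → Fin 2 → ℂ}
    (hψ : ∀ i j, star (ψ i) ⬝ᵥ ψ j = if i = j then 1 else 0) {H V : Matrix (Fin 2) (Fin 2) ℂ}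
    (hV : V ∈ unitaryGroup (Fin 2) ℂ) {e r : ℝ} (he : star (ψ 0) ⬝ᵥ (H *ᵥ ψ 0) = e)
    (hr : star (ψ 0) ⬝ᵥ ((Vᴴ * H * V) *ᵥ ψ 0) = r) (p : ℝ) :
    ((H - Vᴴ * H * V) * ((p : ℂ) • vecMulVec (ψ 0) (star (ψ 0))
        + ((1 - p : ℝ) : ℂ) • vecMulVec (ψ 1) (star (ψ 1)))).trace
      = ((1 - 2 * p) * (r - e) : ℝ) := by
  rw [Complex.ofReal_sub, Complex.ofReal_one, trace_mul_add_smul_vecMulVec hψ, trace_sub,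
    trace_conjTranspose_mul_mul_of_mem_unitaryGroup H hV, sub_mulVec, dotProduct_sub, he, hr]
  push_cast
  ring

end Matrix

theorem stmt_10_general (ψ : Fin 2 → Fin 2 → ℂ)
    (horth : ∀ i j, star (ψ i) ⬝ᵥ ψ j = if i = j then (1 : ℂ) else 0)
    (p : ℝ) (hp : p ≤ 1 / 2)
    (σ : Matrix (Fin 2) (Fin 2) ℂ)
    (hσ : σ = (p : ℂ) • vecMulVec (ψ 0) (star (ψ 0))
        + ((1 - p : ℝ) : ℂ) • vecMulVec (ψ 1) (star (ψ 1)))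
    (H : Matrix (Fin 2) (Fin 2) ℂ) (hH : H.PosSemidef)
    (ω : ℝ) (htr : H.trace = (ω : ℂ)) (hdet : H.det = 0)
    (ε : Fin 2 → ℝ) (hε : ∀ i, star (ψ i) ⬝ᵥ (H *ᵥ ψ i) = (ε i : ℂ)) :
    {w : ℝ | ∃ V ∈ Matrix.unitaryGroup (Fin 2) ℂ,
        ((H - Vᴴ * H * V) * σ).trace = (w : ℂ)}
      = Set.Icc (-((1 - 2 * p) * ε 0)) ((1 - 2 * p) * ε 1)
    ∧ IsGreatest {w : ℝ | ∃ V ∈ Matrix.unitaryGroup (Fin 2) ℂ,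
        ((H - Vᴴ * H * V) * σ).trace = (w : ℂ)} ((1 - 2 * p) * ε 1) := by
  have hε1 : ε 1 = ω - ε 0 := by
    have := trace_eq_sum_dotProduct_mulVec horth H
    rw [htr, Fin.sum_univ_two, hε, hε] at this
    have : ω = ε 0 + ε 1 := by exact_mod_cast this
    linarith
  have hω : 0 ≤ ω := by exact_mod_cast htr ▸ hH.trace_nonneg
  have hset : {w : ℝ | ∃ V ∈ unitaryGroup (Fin 2) ℂ, ((H - Vᴴ * H * V) * σ).trace = (w : ℂ)}
      = (fun r => (1 - 2 * p) * (r - ε 0)) '' Set.Icc 0 ω := by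
    subst hσ
    ext w
    constructor
    · rintro ⟨V, hV, hw⟩
      obtain ⟨r, hr, hq⟩ := hH.exists_dotProduct_conj_mulVec_eq_ofReal_mem_Icc horth htr hV 0
      refine ⟨r, hr, ?_⟩
      exact_mod_cast (trace_sub_conjTranspose_mul_mul_mul_eq horth hV (hε 0) hq p).symm.trans hw
    · rintro ⟨r, hr, rfl⟩
      rw [← hH.uIcc_eigenvalues_eq_Icc hdet htr] at hr
      obtain ⟨V, hV, hq⟩ := hH.1.exists_unitary_dotProduct_conj_mulVec_eq horth hr
      exact ⟨V, hV, trace_sub_conjTranspose_mul_mul_mul_eq horth hV (hε 0) hq p⟩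
  rw [hset, Set.image_mul_sub_Icc_zero (by linarith) hω, ← hε1]
  exact ⟨rfl, isGreatest_Icc (by nlinarith)⟩

/-- For a qubit state `σ = p|ψ₀⟩⟨ψ₀| + (1-p)|ψ₁⟩⟨ψ₁|` (`0 ≤ p ≤ 1/2`) and a
positive semidefinite Hamiltonian `H` with eigenvalues `0` and `ω > 0` (encoded by
`Tr H = ω`, `det H = 0`), the set of attainable works `Tr[(H - V†HV)σ]` over all
unitaries `V` is exactly `[-(1-2p)ε₀, (1-2p)ε₁]`, where `ε_i = ⟨ψ_i|H|ψ_i⟩`; in particular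
the maximal extractable work (the ergotropy of `σ`) equals `(1-2p)ε₁`. -/
theorem stmt_10 (ψ : Fin 2 → Fin 2 → ℂ)
    (horth : ∀ i j, star (ψ i) ⬝ᵥ ψ j = if i = j then (1 : ℂ) else 0)
    (p : ℝ) (hp0 : 0 ≤ p) (hp : p ≤ 1 / 2)
    (σ : Matrix (Fin 2) (Fin 2) ℂ)
    (hσ : σ = (p : ℂ) • vecMulVec (ψ 0) (star (ψ 0))
        + ((1 - p : ℝ) : ℂ) • vecMulVec (ψ 1) (star (ψ 1)))
    (H : Matrix (Fin 2) (Fin 2) ℂ) (hH : H.PosSemidef)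
    (ω : ℝ) (hω : 0 < ω) (htr : H.trace = (ω : ℂ)) (hdet : H.det = 0)
    (ε : Fin 2 → ℝ) (hε : ∀ i, star (ψ i) ⬝ᵥ (H *ᵥ ψ i) = (ε i : ℂ)) :
    {w : ℝ | ∃ V ∈ Matrix.unitaryGroup (Fin 2) ℂ,
        ((H - Vᴴ * H * V) * σ).trace = (w : ℂ)}
      = Set.Icc (-((1 - 2 * p) * ε 0)) ((1 - 2 * p) * ε 1)
    ∧ IsGreatest {w : ℝ | ∃ V ∈ Matrix.unitaryGroup (Fin 2) ℂ,
        ((H - Vᴴ * H * V) * σ).trace = (w : ℂ)} ((1 - 2 * p) * ε 1) :=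
  stmt_10_general ψ horth p hp σ hσ H hH ω htr hdet ε hε
end

section
/- Let ρ = (1/2)(I + x σ_x + y σ_y + z σ_z) be a 2×2 density matrix given by a Bloch vector (x, y, z) with x² + y² + z² ≤ 1 (σ_x, σ_y, σ_z the Pauli matrices with σ_z = diag(1, −1)), and let H = diag(0, ω) with ω > 0. Then the ergotropy of ρ, i.e., the maximum over 2×2 unitaries V of Tr[(H − V†HV) ρ], equals (ω/2)(√(x² + y² + z²) − z). Setting x = y = 0 in the variational problem gives the incoherent ergotropy R_I = (ω/2)(|z| − z), and the coherent ergotropy is R_C = (ω/2)(√(x² + y² + z²) − |z|). -/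
/-!
Write `H = diag(0, ω)` and let `(a, b)` be the second row of `V`. Then
`Tr[V†HVρ] = ω ⟨u|ρ|u⟩` with `u = (ā, b̄)`, and `⟨u|ρ|u⟩ = (1 + n·s)/2` where `n = (x, y, z)` and
`s` is the Bloch vector of `u`, a unit vector. Hence the work is `(ω/2)(-z - n·s)`, which
Cauchy–Schwarz bounds by `(ω/2)(|n| - z)`, with equality at `s = -n/|n|`; every unit `(a, b)` is
the second row of a unitary. The dephased state has Bloch vector `(0, 0, z)`, so the
incoherent ergotropy is the same computation with `|n| = |z|`.
-/

open Matrix ComplexConjugate Complex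

noncomputable section

def blochState (x y z : ℝ) : Matrix (Fin 2) (Fin 2) ℂ :=
  (1 / 2 : ℂ) • (1 + (x : ℂ) • !![0, 1; 1, 0] + (y : ℂ) • !![0, -I; I, 0]
    + (z : ℂ) • !![1, 0; 0, -1])

/-- `(2 Re(a b̄), 2 Im(a b̄), |a|² - |b|²)` is the Bloch vector of the pure state `(ā, b̄)`. -/
def blochDot (x y z : ℝ) (a b : ℂ) : ℝ :=
  x * (2 * (a * conj b).re) + y * (2 * (a * conj b).im) + z * (normSq a - normSq b)

def workSet {n : Type*} [Fintype n] [DecidableEq n] (H ρ : Matrix n n ℂ) : Set ℝ :=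
  {w | ∃ V ∈ unitaryGroup n ℂ, ((H - Vᴴ * H * V) * ρ).trace = w}

def qubitHamiltonian (ω : ℝ) : Matrix (Fin 2) (Fin 2) ℂ := !![0, 0; 0, (ω : ℂ)]

end

theorem blochVector_normSq (a b : ℂ) :
    (2 * (a * conj b).re) ^ 2 + (2 * (a * conj b).im) ^ 2 + (normSq a - normSq b) ^ 2
      = (normSq a + normSq b) ^ 2 := by
  have h := normSq_mul a (conj b)
  rw [normSq_conj, normSq_apply (a * conj b)] at h
  linear_combination 4 * h

theorem neg_sqrt_le_blochDot (x y z : ℝ) {a b : ℂ} (hab : normSq a + normSq b = 1) :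
    -√(x ^ 2 + y ^ 2 + z ^ 2) ≤ blochDot x y z a b := by
  set p := 2 * (a * conj b).re
  set q := 2 * (a * conj b).im
  set t := normSq a - normSq b
  have hunit : p ^ 2 + q ^ 2 + t ^ 2 = 1 := by
    rw [blochVector_normSq, hab, one_pow]
  have cauchySchwarz : (x * p + y * q + z * t) ^ 2 ≤ x ^ 2 + y ^ 2 + z ^ 2 := by
    nlinarith [sq_nonneg (x * q - y * p), sq_nonneg (x * t - z * p), sq_nonneg (y * t - z * q)]
  exact (abs_le.mp (Real.abs_le_sqrt cauchySchwarz)).1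

theorem sum_normSq_row_eq_one {n : Type*} [Fintype n] [DecidableEq n]
    {V : Matrix n n ℂ} (hV : V ∈ unitaryGroup n ℂ) (i : n) :
    ∑ j, normSq (V i j) = 1 := by
  have h := congrFun (congrFun (mem_unitaryGroup_iff.mp hV) i) i
  simp only [mul_apply, star_apply, RCLike.star_def, mul_conj, one_apply_eq] at h
  exact_mod_cast h

theorem row_mem_unitaryGroup {a b : ℂ} (hab : normSq a + normSq b = 1) :
    !![conj b, -conj a; a, b] ∈ unitaryGroup (Fin 2) ℂ := by
  have hab' : (normSq a + normSq b : ℂ) = 1 := by exact_mod_cast hab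
  rw [mem_unitaryGroup_iff]
  ext i j
  fin_cases i <;> fin_cases j <;>
    simp [mul_apply, Fin.sum_univ_two, mul_conj] <;> first | ring1 | linear_combination hab'

theorem trace_work_blochState (x y z ω : ℝ) (V : Matrix (Fin 2) (Fin 2) ℂ) :
    ((qubitHamiltonian ω - Vᴴ * qubitHamiltonian ω * V) * blochState x y z).trace
      = ((ω / 2 * (1 - z)
          - ω / 2 * (normSq (V 1 0) + normSq (V 1 1) + blochDot x y z (V 1 0) (V 1 1)) : ℝ)
        : ℂ) := by
  apply Complex.ext <;>
    simp [qubitHamiltonian, blochState, blochDot, trace_fin_two, mul_apply, Fin.sum_univ_two,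
      normSq_apply] <;>
    ring

-- The optimum is the pure state with Bloch vector `-(x, y, z) / r`; the normalised formula for
-- its amplitudes breaks down when `r + z = 0`, where `(1, 0)` does the job.
theorem exists_blochDot_eq_neg_sqrt (x y z : ℝ) :
    ∃ a b : ℂ, normSq a + normSq b = 1 ∧ blochDot x y z a b = -√(x ^ 2 + y ^ 2 + z ^ 2) := by
  set r := √(x ^ 2 + y ^ 2 + z ^ 2)
  have hr2 : r ^ 2 = x ^ 2 + y ^ 2 + z ^ 2 := Real.sq_sqrt (by positivity)
  have hzr : |z| ≤ r := Real.abs_le_sqrt (by nlinarith)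
  rcases (neg_le_of_abs_le hzr).eq_or_lt with hz_eq | hz_gt
  · exact ⟨1, 0, by simp, by simp [blochDot]; linarith⟩
  · set N := √(2 * r * (r + z))
    have hrpos : 0 < r := by linarith [le_of_abs_le hzr]
    have hN2 : N ^ 2 = 2 * r * (r + z) := Real.sq_sqrt (by nlinarith)
    have hN : N ≠ 0 := (Real.sqrt_pos.mpr (by nlinarith)).ne'
    refine ⟨⟨x / N, y / N⟩, ((-(z + r) / N : ℝ) : ℂ), ?_, ?_⟩
    · rw [normSq_mk, normSq_ofReal]
      field_simp
      linear_combination -hr2 - hN2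
    · simp only [blochDot, normSq_apply, conj_ofReal, mul_re, mul_im, ofReal_re, ofReal_im,
        mul_zero, sub_zero, add_zero]
      field_simp
      linear_combination (2 * r + z) * hr2 + r * hN2

theorem le_of_mem_workSet_blochState (x y z : ℝ) {ω w : ℝ} (hω : 0 ≤ ω)
    (hw : w ∈ workSet (qubitHamiltonian ω) (blochState x y z)) :
    w ≤ ω / 2 * (√(x ^ 2 + y ^ 2 + z ^ 2) - z) := by
  obtain ⟨V, hV, htr⟩ := hw
  rw [trace_work_blochState, ofReal_inj] at htr
  have hrow : normSq (V 1 0) + normSq (V 1 1) = 1 := by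
    simpa [Fin.sum_univ_two] using sum_normSq_row_eq_one hV 1
  have hdot := mul_le_mul_of_nonneg_left (neg_sqrt_le_blochDot x y z hrow) hω
  rw [hrow] at htr
  linarith

theorem mem_workSet_blochState (x y z ω : ℝ) :
    ω / 2 * (√(x ^ 2 + y ^ 2 + z ^ 2) - z) ∈ workSet (qubitHamiltonian ω) (blochState x y z) := by
  obtain ⟨a, b, hab, hdot⟩ := exists_blochDot_eq_neg_sqrt x y z
  refine ⟨!![conj b, -conj a; a, b], row_mem_unitaryGroup hab, ?_⟩
  rw [trace_work_blochState]
  simp only [of_apply, cons_val_one, cons_val_zero, hab, hdot]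
  push_cast
  ring

theorem isGreatest_workSet_blochState (x y z : ℝ) {ω : ℝ} (hω : 0 ≤ ω) :
    IsGreatest (workSet (qubitHamiltonian ω) (blochState x y z))
      (ω / 2 * (√(x ^ 2 + y ^ 2 + z ^ 2) - z)) :=
  ⟨mem_workSet_blochState x y z ω, fun _ hw => le_of_mem_workSet_blochState x y z hω hw⟩

theorem stmt_11_general (x y z ω : ℝ) (hω : 0 < ω) :
    let σx : Matrix (Fin 2) (Fin 2) ℂ := !![0, 1; 1, 0]
    let σy : Matrix (Fin 2) (Fin 2) ℂ := !![0, -Complex.I; Complex.I, 0]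
    let σz : Matrix (Fin 2) (Fin 2) ℂ := !![1, 0; 0, -1]
    let ρ : Matrix (Fin 2) (Fin 2) ℂ :=
      (1 / 2 : ℂ) • (1 + (x : ℂ) • σx + (y : ℂ) • σy + (z : ℂ) • σz)
    let ρdeph : Matrix (Fin 2) (Fin 2) ℂ := (1 / 2 : ℂ) • (1 + (z : ℂ) • σz)
    let H : Matrix (Fin 2) (Fin 2) ℂ := !![0, 0; 0, (ω : ℂ)]
    IsGreatest {w : ℝ | ∃ V ∈ Matrix.unitaryGroup (Fin 2) ℂ,
        ((H - Vᴴ * H * V) * ρ).trace = (w : ℂ)}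
      (ω / 2 * (Real.sqrt (x ^ 2 + y ^ 2 + z ^ 2) - z))
    ∧ IsGreatest {w : ℝ | ∃ V ∈ Matrix.unitaryGroup (Fin 2) ℂ,
        ((H - Vᴴ * H * V) * ρdeph).trace = (w : ℂ)}
      (ω / 2 * (|z| - z))
    ∧ ω / 2 * (Real.sqrt (x ^ 2 + y ^ 2 + z ^ 2) - z) - ω / 2 * (|z| - z)
      = ω / 2 * (Real.sqrt (x ^ 2 + y ^ 2 + z ^ 2) - |z|) := by
  intro σx σy σz ρ ρdeph H
  have hdeph : ρdeph = blochState 0 0 z := by simp [ρdeph, σz, blochState]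
  have hincoherent := isGreatest_workSet_blochState 0 0 z hω.le
  rw [show √((0 : ℝ) ^ 2 + 0 ^ 2 + z ^ 2) = |z| by simp [Real.sqrt_sq_eq_abs]] at hincoherent
  refine ⟨isGreatest_workSet_blochState x y z hω.le, ?_, by ring⟩
  rw [hdeph]
  exact hincoherent

/-- For a qubit with Bloch vector `(x, y, z)` and Hamiltonian
`H = diag(0, ω)` with `ω > 0`, the ergotropy equals `(ω/2)(√(x²+y²+z²) - z)`; the
incoherent ergotropy (obtained by setting `x = y = 0`, i.e. from the dephased state)
equals `(ω/2)(|z| - z)`, and the coherent ergotropy is `(ω/2)(√(x²+y²+z²) - |z|)`. -/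
theorem stmt_11 (x y z ω : ℝ) (hball : x ^ 2 + y ^ 2 + z ^ 2 ≤ 1) (hω : 0 < ω) :
    let σx : Matrix (Fin 2) (Fin 2) ℂ := !![0, 1; 1, 0]
    let σy : Matrix (Fin 2) (Fin 2) ℂ := !![0, -Complex.I; Complex.I, 0]
    let σz : Matrix (Fin 2) (Fin 2) ℂ := !![1, 0; 0, -1]
    let ρ : Matrix (Fin 2) (Fin 2) ℂ :=
      (1 / 2 : ℂ) • (1 + (x : ℂ) • σx + (y : ℂ) • σy + (z : ℂ) • σz)
    let ρdeph : Matrix (Fin 2) (Fin 2) ℂ := (1 / 2 : ℂ) • (1 + (z : ℂ) • σz)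
    let H : Matrix (Fin 2) (Fin 2) ℂ := !![0, 0; 0, (ω : ℂ)]
    IsGreatest {w : ℝ | ∃ V ∈ Matrix.unitaryGroup (Fin 2) ℂ,
        ((H - Vᴴ * H * V) * ρ).trace = (w : ℂ)}
      (ω / 2 * (Real.sqrt (x ^ 2 + y ^ 2 + z ^ 2) - z))
    ∧ IsGreatest {w : ℝ | ∃ V ∈ Matrix.unitaryGroup (Fin 2) ℂ,
        ((H - Vᴴ * H * V) * ρdeph).trace = (w : ℂ)}
      (ω / 2 * (|z| - z))
    ∧ ω / 2 * (Real.sqrt (x ^ 2 + y ^ 2 + z ^ 2) - z) - ω / 2 * (|z| - z)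
      = ω / 2 * (Real.sqrt (x ^ 2 + y ^ 2 + z ^ 2) - |z|) :=
  stmt_11_general x y z ω hω
end

section
/- Let ψ₀, ψ₁ be an orthonormal basis of ℂⁿ, let σ = p|ψ₀⟩⟨ψ₀| + (1−p)|ψ₁⟩⟨ψ₁| + τ where τ is any operator commuting with |ψ₀⟩⟨ψ₀| (in the qubit case τ = 0), let H be an n×n Hermitian matrix and V an n×n unitary. For t ∈ ℝ define V(t) = V e^{i|ψ₀⟩⟨ψ₀| t}. Then: (i) Tr[V(t)† H V(t) σ] = Tr[V† H V σ] for all t, so the extracted work Tr[(H − V(t)†HV(t))σ] is independent of t; and (ii) ⟨ψ₁| V(t)† H V(t) |ψ₀⟩ = e^{it} ⟨ψ₁| V† H V |ψ₀⟩, so the phase of the off-diagonal matrix element of the rotated Hamiltonian can be tuned to any value while keeping the extracted work fixed. -/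
open Matrix NormedSpace

/-!
Since `P` is an idempotent, `e^{itP} = 1 + (e^{it} - 1) P`. This is a unitary commuting with `σ`
(because `σ` commutes with `P`), so conjugating `V†HV` by it leaves `Tr[V†HV σ]` unchanged by
cyclicity of the trace; and it multiplies `ψ₀` by `e^{it}` while fixing `ψ₁ ⊥ ψ₀`, which gives
the phase of the off-diagonal entry.
-/

theorem IsIdempotentElem.exp_smul {A : Type*} [Ring A] [Algebra ℂ A] [TopologicalSpace A]
    [IsTopologicalRing A] [ContinuousSMul ℂ A] [T2Space A] {P : A} (hP : IsIdempotentElem P)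
    (c : ℂ) : exp (c • P) = 1 + (Complex.exp c - 1) • P := by
  have hterm : ∀ k : ℕ, ((k.factorial : ℂ)⁻¹) • (c • P) ^ k
      = ((k.factorial : ℂ)⁻¹ • c ^ k) • P + if k = 0 then 1 - P else 0 := by
    rintro (_ | k)
    · simp
    · rw [smul_pow, hP.pow_succ_eq, smul_smul, if_neg k.succ_ne_zero, add_zero, smul_eq_mul]
  have hsum : HasSum (fun k : ℕ => ((k.factorial : ℂ)⁻¹) • (c • P) ^ k)
      (Complex.exp c • P + (1 - P)) := by
    simp_rw [hterm]
    refine HasSum.add ?_ (hasSum_ite_eq 0 (1 - P))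
    rw [Complex.exp_eq_exp_ℂ]
    exact (exp_series_hasSum_exp' c).smul_const P
  rw [congrFun (exp_eq_tsum ℂ) _, hsum.tsum_eq, sub_smul, one_smul]
  abel

theorem IsIdempotentElem.one_add_smul_mul_one_add_smul {R A : Type*} [CommRing R] [Ring A]
    [Algebra R A] {P : A} (hP : IsIdempotentElem P) (a b : R) :
    (1 + (a - 1) • P) * (1 + (b - 1) • P) = 1 + (a * b - 1) • P := by
  simp only [mul_add, add_mul, one_mul, mul_one, smul_mul_smul_comm, hP.eq]
  rw [add_assoc, ← add_smul, ← add_smul]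
  congr 2
  ring

theorem IsStarProjection.one_add_smul_mem_unitary {R A : Type*} [CommRing R] [StarRing R]
    [Ring A] [StarRing A] [Algebra R A] [StarModule R A] {P : A} (hP : IsStarProjection P)
    {z : R} (hz : z ∈ unitary R) : 1 + (z - 1) • P ∈ unitary A := by
  have hstar : star (1 + (z - 1) • P) = 1 + (star z - 1) • P := by
    simp [star_smul, hP.isSelfAdjoint.star_eq]
  rw [Unitary.mem_iff, hstar, hP.isIdempotentElem.one_add_smul_mul_one_add_smul,
    hP.isIdempotentElem.one_add_smul_mul_one_add_smul, Unitary.star_mul_self_of_mem hz,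
    Unitary.mul_star_self_of_mem hz]
  simp

namespace Matrix

variable {m α : Type*} [Fintype m]

theorem isStarProjection_vecMulVec_star [Semiring α] [StarRing α] {v : m → α}
    (hv : star v ⬝ᵥ v = 1) : IsStarProjection (vecMulVec v (star v)) where
  isIdempotentElem := by rw [IsIdempotentElem, vecMulVec_mul_vecMulVec, hv, one_smul]
  isSelfAdjoint := by rw [IsSelfAdjoint, star_eq_conjTranspose, conjTranspose_vecMulVec, star_star]

theorem commute_vecMulVec_of_dotProduct_eq_zero [Semiring α] {u v w x : m → α}
    (hvw : v ⬝ᵥ w = 0) (hxu : x ⬝ᵥ u = 0) : Commute (vecMulVec u v) (vecMulVec w x) := by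
  rw [Commute, SemiconjBy, vecMulVec_mul_vecMulVec, vecMulVec_mul_vecMulVec, hvw, hxu,
    zero_smul, zero_smul, vecMulVec_zero, vecMulVec_zero]

theorem one_add_smul_vecMulVec_mulVec [CommSemiring α] [DecidableEq m] (c : α) (u x w : m → α) :
    (1 + c • vecMulVec u x) *ᵥ w = w + (c * (x ⬝ᵥ w)) • u := by
  rw [add_mulVec, one_mulVec, smul_mulVec, vecMulVec_mulVec, op_smul_eq_smul, smul_smul]

theorem trace_conjTranspose_mul_mul_mul_of_commute [CommRing α] [StarRing α] [DecidableEq m]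
    {U S : Matrix m m α} (hU : U ∈ unitaryGroup m α) (hUS : Commute U S) (M : Matrix m m α) :
    (Uᴴ * M * U * S).trace = (M * S).trace := by
  calc (Uᴴ * M * U * S).trace = (Uᴴ * (M * S) * U).trace := by
        rw [mul_assoc _ U, hUS.eq, ← mul_assoc, mul_assoc Uᴴ]
    _ = (U * Uᴴ * (M * S)).trace := by rw [trace_mul_comm, mul_assoc]
    _ = (M * S).trace := by rw [← star_eq_conjTranspose, Unitary.mul_star_self_of_mem hU, one_mul]

theorem star_dotProduct_conjTranspose_mul_mul_mulVec [CommSemiring α] [StarRing α]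
    (U M : Matrix m m α) (v w : m → α) :
    star v ⬝ᵥ ((Uᴴ * M * U) *ᵥ w) = star (U *ᵥ v) ⬝ᵥ (M *ᵥ (U *ᵥ w)) := by
  rw [← mulVec_mulVec, ← mulVec_mulVec, dotProduct_mulVec, star_mulVec]

end Matrix

theorem stmt_13_general (n : ℕ) (ψ : Fin 2 → Fin n → ℂ)
    (horth : ∀ i j, star (ψ i) ⬝ᵥ ψ j = if i = j then (1 : ℂ) else 0)
    (p : ℝ) (τ : Matrix (Fin n) (Fin n) ℂ)
    (hτ : Commute τ (vecMulVec (ψ 0) (star (ψ 0))))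
    (σ : Matrix (Fin n) (Fin n) ℂ)
    (hσ : σ = (p : ℂ) • vecMulVec (ψ 0) (star (ψ 0))
        + ((1 - p : ℝ) : ℂ) • vecMulVec (ψ 1) (star (ψ 1)) + τ)
    (H V : Matrix (Fin n) (Fin n) ℂ) (t : ℝ) :
    let P : Matrix (Fin n) (Fin n) ℂ := vecMulVec (ψ 0) (star (ψ 0))
    let Vt : Matrix (Fin n) (Fin n) ℂ := V * NormedSpace.exp ((Complex.I * t) • P)
    ((Vtᴴ * H * Vt * σ).trace = (Vᴴ * H * V * σ).trace)
    ∧ (star (ψ 1) ⬝ᵥ ((Vtᴴ * H * Vt) *ᵥ ψ 0)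
        = Complex.exp (Complex.I * t) * (star (ψ 1) ⬝ᵥ ((Vᴴ * H * V) *ᵥ ψ 0))) := by
  intro P Vt
  have h00 : star (ψ 0) ⬝ᵥ ψ 0 = 1 := by simpa using horth 0 0
  have h01 : star (ψ 0) ⬝ᵥ ψ 1 = 0 := by simpa using horth 0 1
  have h10 : star (ψ 1) ⬝ᵥ ψ 0 = 0 := by simpa using horth 1 0
  have hP : IsStarProjection P := isStarProjection_vecMulVec_star h00
  have hz : Complex.exp (Complex.I * t) ∈ unitary ℂ := by
    simp [Unitary.mem_iff_star_mul_self, ← Complex.exp_conj, ← Complex.exp_add]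
  set z := Complex.exp (Complex.I * t)
  set E := 1 + (z - 1) • P
  have hVt : Vtᴴ * H * Vt = Eᴴ * (Vᴴ * H * V) * E := by
    simp only [Vt, hP.isIdempotentElem.exp_smul, conjTranspose_mul, Matrix.mul_assoc]; rfl
  have hE : E ∈ unitaryGroup (Fin n) ℂ := hP.one_add_smul_mem_unitary hz
  have hPσ : Commute P σ := by
    rw [hσ]
    refine (((Commute.refl P).smul_right _).add_right ?_).add_right hτ.symm
    exact (commute_vecMulVec_of_dotProduct_eq_zero h01 h10).smul_right _
  constructor
  · rw [hVt, trace_conjTranspose_mul_mul_mul_of_commute hE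
      ((Commute.one_left σ).add_left (hPσ.smul_left _))]
  · have hEψ₀ : E *ᵥ ψ 0 = z • ψ 0 := by
      rw [one_add_smul_vecMulVec_mulVec, h00, mul_one, sub_smul, one_smul, add_sub_cancel]
    have hEψ₁ : E *ᵥ ψ 1 = ψ 1 := by
      rw [one_add_smul_vecMulVec_mulVec, h01, mul_zero, zero_smul, add_zero]
    rw [hVt, star_dotProduct_conjTranspose_mul_mul_mulVec, hEψ₀, hEψ₁, mulVec_smul,
      dotProduct_smul, smul_eq_mul]

/-- Phase-tuning unitaries. With `P = |ψ₀⟩⟨ψ₀|`, `V(t) = V e^{iPt}`, and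
`σ = p|ψ₀⟩⟨ψ₀| + (1-p)|ψ₁⟩⟨ψ₁| + τ` where `τ` commutes with `P`:
(i) `Tr[V(t)†HV(t) σ] = Tr[V†HV σ]` for all `t`, and
(ii) `⟨ψ₁|V(t)†HV(t)|ψ₀⟩ = e^{it} ⟨ψ₁|V†HV|ψ₀⟩`. -/
theorem stmt_13 (n : ℕ) (ψ : Fin 2 → Fin n → ℂ)
    (horth : ∀ i j, star (ψ i) ⬝ᵥ ψ j = if i = j then (1 : ℂ) else 0)
    (p : ℝ) (τ : Matrix (Fin n) (Fin n) ℂ)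
    (hτ : Commute τ (vecMulVec (ψ 0) (star (ψ 0))))
    (σ : Matrix (Fin n) (Fin n) ℂ)
    (hσ : σ = (p : ℂ) • vecMulVec (ψ 0) (star (ψ 0))
        + ((1 - p : ℝ) : ℂ) • vecMulVec (ψ 1) (star (ψ 1)) + τ)
    (H V : Matrix (Fin n) (Fin n) ℂ)
    (hH : H.IsHermitian) (hV : V ∈ Matrix.unitaryGroup (Fin n) ℂ) (t : ℝ) :
    let P : Matrix (Fin n) (Fin n) ℂ := vecMulVec (ψ 0) (star (ψ 0))
    let Vt : Matrix (Fin n) (Fin n) ℂ := V * NormedSpace.exp ((Complex.I * t) • P)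
    ((Vtᴴ * H * Vt * σ).trace = (Vᴴ * H * V * σ).trace)
    ∧ (star (ψ 1) ⬝ᵥ ((Vtᴴ * H * Vt) *ᵥ ψ 0)
        = Complex.exp (Complex.I * t) * (star (ψ 1) ⬝ᵥ ((Vᴴ * H * V) *ᵥ ψ 0))) :=
  stmt_13_general n ψ horth p τ hτ σ hσ H V t
end

section
/- Let 0 < c ≤ 1 and R ≥ 1. Define F(w) = −w² + 1/2 − R √(1/4 − w²/c²) for w ∈ [−c/2, c/2]. Then the minimum of F over this interval is attained at w = 0 and equals (1 − R)/2. In particular, for the coherent 'plus' state of a qubit coupled to a reflection-symmetric non-classical weight state with radius parameter R > 1 (and c = 1 − 2p), the maximal possible decrease of the weight's energy variance is (1 − R)/2 < 0 and occurs when no work is extracted. -/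
/-- For `0 < c ≤ 1` and `R ≥ 1`, the lower boundary
`F(w) = -w² + 1/2 - R √(1/4 - w²/c²)` of the qubit work–variance phase space attains its
minimum over `[-c/2, c/2]` at `w = 0`, with value `(1 - R)/2`. -/
theorem stmt_16 (c R : ℝ) (hc0 : 0 < c) (hc1 : c ≤ 1) (hR : 1 ≤ R) :
    let F : ℝ → ℝ := fun w => -w ^ 2 + 1 / 2 - R * Real.sqrt (1 / 4 - w ^ 2 / c ^ 2)
    F 0 = (1 - R) / 2 ∧ IsLeast (F '' Set.Icc (-(c / 2)) (c / 2)) ((1 - R) / 2) := by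
  intro F
  have hF0 : F 0 = (1 - R) / 2 := by
    have h14 : Real.sqrt (1 / 4 - 0 ^ 2 / c ^ 2) = 1 / 2 := by
      have : (1 : ℝ) / 4 - 0 ^ 2 / c ^ 2 = (1 / 2) ^ 2 := by ring
      rw [this, Real.sqrt_sq (by norm_num)]
    simp only [F, h14]; ring
  refine ⟨hF0, ⟨0, ?_, hF0⟩, ?_⟩
  · constructor <;> nlinarith
  · rintro y ⟨w, ⟨hw1, hw2⟩, rfl⟩
    have hwc : w ^ 2 ≤ (c / 2) ^ 2 := sq_le_sq' hw1 hw2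
    have hw14 : w ^ 2 ≤ 1 / 4 := by nlinarith
    have hkey : Real.sqrt (1 / 4 - w ^ 2 / c ^ 2) ≤ 1 / 2 - w ^ 2 := by
      have harg : 1 / 4 - w ^ 2 / c ^ 2 ≤ (1 / 2 - w ^ 2) ^ 2 := by
        have h1 : w ^ 2 ≤ w ^ 2 / c ^ 2 := by
          rw [le_div_iff₀ (by positivity)]; nlinarith [sq_nonneg w, mul_le_one₀ hc1 hc0.le hc1]
        nlinarith [sq_nonneg (w ^ 2)]
      calc Real.sqrt (1 / 4 - w ^ 2 / c ^ 2) ≤ Real.sqrt ((1 / 2 - w ^ 2) ^ 2) :=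
            Real.sqrt_le_sqrt harg
        _ = 1 / 2 - w ^ 2 := Real.sqrt_sq (by linarith)
    have hs0 : 0 ≤ Real.sqrt (1 / 4 - w ^ 2 / c ^ 2) := Real.sqrt_nonneg _
    have hs12 : Real.sqrt (1 / 4 - w ^ 2 / c ^ 2) ≤ 1 / 2 := by nlinarith
    simp only [F]
    nlinarith [mul_le_mul_of_nonneg_left hs12 (by linarith : (0:ℝ) ≤ R)]
end

section
/- Let ω > 0, α > 0, z ∈ ℝ, and let σ_t > 0 and σ_E > 0 satisfy the Heisenberg uncertainty relation σ_E σ_t ≥ 1/2. Define the extracted coherent ergotropy R_C = (ω/2)(√(e^{−σ_t² ω²} α² + z²) − |z|), and assume R_C > 0. Then ω² α² / (4 R_C (R_C + |z| ω)) > 1 and σ_E ≥ ω / (2 √( log[ ω² α² / (4 R_C (R_C + |z| ω)) ] )). In particular, as R_C approaches its maximal value (ω/2)(√(α² + z²) − |z|), the lower bound on the energy dispersion σ_E diverges. -/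
/-- For a qubit coupled to a Gaussian weight with dispersions satisfying the
Heisenberg uncertainty relation `σ_E σ_t ≥ 1/2`, the extracted coherent ergotropy
`R_C = (ω/2)(√(e^{-σ_t²ω²} α² + z²) - |z|) > 0` forces
`ω²α²/(4 R_C (R_C + |z|ω)) > 1` and
`σ_E ≥ ω / (2 √(log[ω²α²/(4 R_C (R_C + |z|ω))]))`. -/
theorem stmt_17 (ω α z σt σE : ℝ) (hω : 0 < ω) (hα : 0 < α)
    (hσt : 0 < σt) (hσE : 0 < σE) (hHUR : 1 / 2 ≤ σE * σt) :
    let RC : ℝ := ω / 2 * (Real.sqrt (Real.exp (-(σt ^ 2 * ω ^ 2)) * α ^ 2 + z ^ 2) - |z|)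
    0 < RC →
      1 < ω ^ 2 * α ^ 2 / (4 * RC * (RC + |z| * ω))
      ∧ ω / (2 * Real.sqrt (Real.log (ω ^ 2 * α ^ 2 / (4 * RC * (RC + |z| * ω))))) ≤ σE := by
  intro RC hRC
  set E := Real.exp (-(σt ^ 2 * ω ^ 2)) with hE
  have hEpos : 0 < E := Real.exp_pos _
  set s := Real.sqrt (E * α ^ 2 + z ^ 2) with hs
  have harg : 0 ≤ E * α ^ 2 + z ^ 2 := by positivity
  have hs2 : s ^ 2 = E * α ^ 2 + z ^ 2 := Real.sq_sqrt harg
  have hkey : 4 * RC * (RC + |z| * ω) = ω ^ 2 * E * α ^ 2 := by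
    have : RC + |z| * ω = ω / 2 * (s + |z|) := by
      simp only [RC]; ring
    rw [this]
    have : RC = ω / 2 * (s - |z|) := rfl
    rw [this]
    have hz2 : |z| ^ 2 = z ^ 2 := sq_abs z
    nlinarith [hs2, hz2]
  have hratio : ω ^ 2 * α ^ 2 / (4 * RC * (RC + |z| * ω)) = Real.exp (σt ^ 2 * ω ^ 2) := by
    rw [hkey, hE]
    rw [Real.exp_neg]
    field_simp
  have h1 : 1 < ω ^ 2 * α ^ 2 / (4 * RC * (RC + |z| * ω)) := by
    rw [hratio]
    have : 0 < σt ^ 2 * ω ^ 2 := by positivity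
    calc (1 : ℝ) = Real.exp 0 := (Real.exp_zero).symm
    _ < Real.exp (σt ^ 2 * ω ^ 2) := Real.exp_lt_exp.mpr this
  refine ⟨h1, ?_⟩
  rw [hratio, Real.log_exp]
  have hsq : Real.sqrt (σt ^ 2 * ω ^ 2) = σt * ω := by
    rw [show σt ^ 2 * ω ^ 2 = (σt * ω) ^ 2 by ring]
    exact Real.sqrt_sq (by positivity)
  rw [hsq]
  rw [div_le_iff₀ (by positivity)]
  nlinarith [hHUR, hω.le, hσE.le]
end

section
/- Let ρ = (1/2)(I + x σ_x + y σ_y + z σ_z) be a 2×2 density matrix with Bloch vector satisfying x² + y² + z² ≤ 1 (σ_z = diag(1, −1)), let H = diag(0, ω) with ω > 0, and let V = σ_x be the swap unitary. Then the work operator W = H − σ_x H σ_x equals −ω σ_z, the extracted work is Tr[Wρ] = −ω z, and the variance is Tr[W²ρ] − (Tr[Wρ])² = ω²(1 − z²). In particular, when z ≤ 0 (so that the full incoherent ergotropy R_I = −ωz is extracted), the variance equals ω² − R_I². -/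
open Matrix

/-- For a qubit with Bloch vector `(x, y, z)`, `H = diag(0, ω)` and the swap
unitary `V = σ_x`, the work operator is `W = H - σ_x H σ_x = -ω σ_z`, the extracted work
is `Tr[Wρ] = -ωz`, and the variance is `Tr[W²ρ] - (Tr[Wρ])² = ω²(1 - z²)`; when `z ≤ 0`
(full incoherent ergotropy `R_I = -ωz` extracted) the variance equals `ω² - R_I²`. -/
theorem stmt_18 (x y z ω : ℝ) (hball : x ^ 2 + y ^ 2 + z ^ 2 ≤ 1) (hω : 0 < ω) :
    let σx : Matrix (Fin 2) (Fin 2) ℂ := !![0, 1; 1, 0]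
    let σy : Matrix (Fin 2) (Fin 2) ℂ := !![0, -Complex.I; Complex.I, 0]
    let σz : Matrix (Fin 2) (Fin 2) ℂ := !![1, 0; 0, -1]
    let ρ : Matrix (Fin 2) (Fin 2) ℂ :=
      (1 / 2 : ℂ) • (1 + (x : ℂ) • σx + (y : ℂ) • σy + (z : ℂ) • σz)
    let H : Matrix (Fin 2) (Fin 2) ℂ := !![0, 0; 0, (ω : ℂ)]
    let W : Matrix (Fin 2) (Fin 2) ℂ := H - σxᴴ * H * σx
    W = (-(ω : ℂ)) • σz
    ∧ (W * ρ).trace = ((-(ω * z) : ℝ) : ℂ)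
    ∧ (W ^ 2 * ρ).trace - (W * ρ).trace ^ 2 = ((ω ^ 2 * (1 - z ^ 2) : ℝ) : ℂ)
    ∧ (z ≤ 0 →
        (W ^ 2 * ρ).trace - (W * ρ).trace ^ 2 = ((ω ^ 2 - (-(ω * z)) ^ 2 : ℝ) : ℂ)) := by
  intro σx σy σz ρ H W
  have h1 : W = (-(ω : ℂ)) • σz := by
    simp only [W, σx, σz, H]
    ext i j
    fin_cases i <;> fin_cases j <;>
      simp [Matrix.mul_apply, Fin.sum_univ_two, Matrix.conjTranspose_apply]
  have h2 : (W * ρ).trace = ((-(ω * z) : ℝ) : ℂ) := by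
    simp only [W, ρ, σx, σy, σz, H]
    simp [Matrix.trace_fin_two, Matrix.mul_apply, Fin.sum_univ_two,
      Matrix.conjTranspose_apply, Matrix.one_apply]
    push_cast
    ring
  have h3 : (W ^ 2 * ρ).trace - (W * ρ).trace ^ 2 = ((ω ^ 2 * (1 - z ^ 2) : ℝ) : ℂ) := by
    rw [h2]
    simp only [pow_two, W, ρ, σx, σy, σz, H]
    simp [Matrix.trace_fin_two, Matrix.mul_apply, Fin.sum_univ_two,
      Matrix.conjTranspose_apply, Matrix.one_apply]
    push_cast
    ring
  exact ⟨h1, h2, h3, fun _ => by rw [h3]; push_cast; ring_nf⟩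
end

section
/- Let H be an n×n Hermitian matrix, ρ an n×n density matrix, and let W : ℝ² → ℝ be measurable with ∫∫ |W(E,t)| (1 + |E|) dE dt < ∞ and ∫∫ W(E,t) dE dt = 1. Define m = ∫∫ E W(E,t) dE dt, λ(s) = ∫∫ e^{iEs} W(E,t) dE dt, and the matrix-valued function N(s) = ∫∫ e^{iEs} W(E,t) e^{−iHt} ρ e^{iHt} dE dt, and set ξ(s) = N(s)/λ(s) on a neighborhood of 0 where λ ≠ 0 (note λ(0) = 1). Then ξ is differentiable at 0 with ξ′(0) = i ∫∫ (E − m) W(E,t) e^{−iHt} ρ e^{iHt} dE dt. Consequently, for any Hermitian matrix W_S, −i Tr[W_S ξ′(0)] = ∫∫ (E − m) W(E,t) Tr[W_S e^{−iHt} ρ e^{iHt}] dE dt, which is the F-term of Theorem 1. -/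
/-! The scalar `λ` and the matrix `N` are integrals of `e^{iEs}` against the weight `W`, the
latter with the density `ρ(t) = e^{-iHt} ρ e^{iHt}`, which is bounded uniformly in `t` since it is
a unitary conjugate of `ρ`. Because `∫ |W| (1 + |E|) < ∞`, both can be differentiated under the
integral sign: `λ'(0) = i m` and `N'(0) = i ∫ E W ρ(t)`. Since `λ(0) = 1`, the quotient rule gives
`ξ'(0) = N'(0) - λ'(0) N(0) = i ∫ (E - m) W ρ(t)`, and the trace formula holds because
`X ↦ Tr[W_S X]` is a continuous linear map, hence commutes with the integral. -/

open Matrix NormedSpace MeasureTheory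
open scoped ComplexOrder

attribute [local instance] Matrix.normedAddCommGroup Matrix.normedSpace

section WeightedIntegrals

variable {α : Type*} [MeasurableSpace α] {μ : Measure α}

theorem MeasureTheory.Integrable.of_abs_mul_one_add_abs {f w : α → ℝ}
    (hw : AEStronglyMeasurable w μ) (h : Integrable (fun q => |w q| * (1 + |f q|)) μ) :
    Integrable w μ :=
  h.mono' hw (ae_of_all _ fun q => by
    rw [Real.norm_eq_abs]; nlinarith [abs_nonneg (w q), abs_nonneg (f q)])

theorem MeasureTheory.Integrable.mul_of_abs_mul_one_add_abs {f w : α → ℝ}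
    (hfw : AEStronglyMeasurable (fun q => f q * w q) μ)
    (h : Integrable (fun q => |w q| * (1 + |f q|)) μ) : Integrable (fun q => f q * w q) μ :=
  h.mono' hfw (ae_of_all _ fun q => by
    rw [Real.norm_eq_abs, abs_mul]; nlinarith [abs_nonneg (w q), abs_nonneg (f q)])

theorem integral_sub_mul_smul {E : Type*} [NormedAddCommGroup E] [NormedSpace ℝ E]
    {f w : α → ℝ} {M : α → E} (c : ℝ) (hfw : Integrable (fun q => (f q * w q) • M q) μ)
    (hw : Integrable (fun q => w q • M q) μ) :
    ∫ q, ((f q - c) * w q) • M q ∂μ = ∫ q, (f q * w q) • M q ∂μ - c • ∫ q, w q • M q ∂μ := by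
  have hcw : Integrable (fun q => c • w q • M q) μ := hw.smul c
  simp only [sub_mul, sub_smul, mul_smul c]
  rw [integral_sub hfw hcw, integral_smul]

theorem norm_cexp_I_mul_ofReal_mul_ofReal (E s : ℝ) :
    ‖Complex.exp (Complex.I * (E : ℂ) * (s : ℂ))‖ = 1 := by
  rw [Complex.norm_exp]; simp

theorem hasDerivAt_integral_cexp_mul_smul {E : Type*} [NormedAddCommGroup E] [NormedSpace ℂ E]
    [CompleteSpace E] {f w : α → ℝ} {M : α → E} {C : ℝ} (hf : AEStronglyMeasurable f μ)
    (hw : Integrable w μ) (hfw : Integrable (fun q => f q * w q) μ)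
    (hM : AEStronglyMeasurable M μ) (hMC : ∀ q, ‖M q‖ ≤ C) (s₀ : ℝ) :
    HasDerivAt
      (fun s : ℝ => ∫ q, (Complex.exp (Complex.I * (f q : ℂ) * (s : ℂ)) * (w q : ℂ)) • M q ∂μ)
      (Complex.I • ∫ q, (Complex.exp (Complex.I * (f q : ℂ) * (s₀ : ℂ)) *
        ((f q * w q : ℝ) : ℂ)) • M q ∂μ) s₀ := by
  have hmeas {g : α → ℝ} (hg : AEStronglyMeasurable g μ) (s : ℝ) :
      AEStronglyMeasurable
        (fun q => (Complex.exp (Complex.I * (f q : ℂ) * (s : ℂ)) * (g q : ℂ)) • M q) μ := by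
    refine ((Complex.continuous_exp.comp_aestronglyMeasurable ?_).mul
      (Complex.continuous_ofReal.comp_aestronglyMeasurable hg)).smul hM
    exact ((Complex.continuous_ofReal.comp_aestronglyMeasurable hf).const_mul _).mul_const _
  have hbound (g : α → ℝ) (s : ℝ) (q : α) :
      ‖(Complex.exp (Complex.I * (f q : ℂ) * (s : ℂ)) * (g q : ℂ)) • M q‖ ≤ C * ‖g q‖ := by
    rw [norm_smul, norm_mul, norm_cexp_I_mul_ofReal_mul_ofReal, one_mul, Complex.norm_real,
      mul_comm]
    exact mul_le_mul_of_nonneg_right (hMC q) (norm_nonneg _)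
  have hderiv (q : α) (s : ℝ) :
      HasDerivAt (fun s : ℝ => (Complex.exp (Complex.I * (f q : ℂ) * (s : ℂ)) * (w q : ℂ)) • M q)
        (Complex.I • (Complex.exp (Complex.I * (f q : ℂ) * (s : ℂ)) *
          ((f q * w q : ℝ) : ℂ)) • M q) s := by
    have hphase :
        HasDerivAt (fun s : ℝ => Complex.I * (f q : ℂ) * (s : ℂ)) (Complex.I * f q) s := by
      simpa using (Complex.ofRealCLM.hasDerivAt (x := s)).const_mul (Complex.I * (f q : ℂ))
    convert (hphase.cexp.mul_const (w q : ℂ)).smul_const (M q) using 1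
    rw [smul_smul]
    push_cast
    ring_nf
  have h := hasDerivAt_integral_of_dominated_loc_of_deriv_le (x₀ := s₀) Filter.univ_mem
    (Filter.Eventually.of_forall (hmeas hw.aestronglyMeasurable))
    ((hw.norm.const_mul C).mono' (hmeas hw.aestronglyMeasurable s₀) (ae_of_all _ (hbound w s₀)))
    ((hmeas hfw.aestronglyMeasurable s₀).const_smul Complex.I)
    (ae_of_all _ fun q s _ => by
      rw [norm_smul, Complex.norm_I, one_mul]; exact hbound (fun q => f q * w q) s q)
    (hfw.norm.const_mul C) (ae_of_all _ fun q s _ => hderiv q s)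
  rw [← integral_smul]
  exact h.2

end WeightedIntegrals

theorem HasDerivAt.inv_smul_of_eq_one {E : Type*} [NormedAddCommGroup E] [NormedSpace ℂ E]
    {l : ℝ → ℂ} {N : ℝ → E} {l' : ℂ} {N' : E} {x : ℝ} (hl : HasDerivAt l l' x) (hl1 : l x = 1)
    (hN : HasDerivAt N N' x) : HasDerivAt (fun s => (l s)⁻¹ • N s) (N' - l' • N x) x := by
  refine ((hl.inv (by simp [hl1])).smul hN).congr_deriv ?_
  simp [hl1, sub_eq_add_neg]

theorem Matrix.norm_mul_le_card_mul {l m n α : Type*} [Fintype l] [Fintype m] [Fintype n]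
    [NonUnitalNormedRing α] (A : Matrix l m α) (B : Matrix m n α) :
    ‖A * B‖ ≤ Fintype.card m * (‖A‖ * ‖B‖) := by
  refine (Matrix.norm_le_iff (by positivity)).2 fun i j => ?_
  calc ‖(A * B) i j‖ ≤ ∑ k, ‖A i k * B k j‖ := by rw [Matrix.mul_apply]; exact norm_sum_le _ _
    _ ≤ ∑ _k : m, ‖A‖ * ‖B‖ := Finset.sum_le_sum fun k _ =>
        (norm_mul_le _ _).trans (mul_le_mul (norm_entry_le_entrywise_sup_norm A)
          (norm_entry_le_entrywise_sup_norm B) (norm_nonneg _) (norm_nonneg _))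
    _ = Fintype.card m * (‖A‖ * ‖B‖) := by simp

section MatrixAnalysis

variable {n : Type*} [Fintype n] [DecidableEq n]

theorem Matrix.norm_le_one_of_mem_unitaryGroup {𝕜 : Type*} [RCLike 𝕜] {U : Matrix n n 𝕜}
    (hU : U ∈ Matrix.unitaryGroup n 𝕜) : ‖U‖ ≤ 1 :=
  (Matrix.norm_le_iff zero_le_one).2 (entry_norm_bound_of_unitary hU)

theorem Matrix.IsHermitian.exp_I_smul_mem_unitaryGroup {H : Matrix n n ℂ} (hH : H.IsHermitian)
    (t : ℝ) : NormedSpace.exp ((Complex.I * (t : ℂ)) • H) ∈ Matrix.unitaryGroup n ℂ := by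
  rw [Matrix.mem_unitaryGroup_iff, star_eq_conjTranspose, ← Matrix.exp_conjTranspose,
    conjTranspose_smul, hH.eq, ← Matrix.exp_add_of_commute]
  · simp
  · exact ((Commute.refl H).smul_left _).smul_right _

theorem Matrix.continuous_exp {𝕜 : Type*} [RCLike 𝕜] :
    Continuous (fun A : Matrix n n 𝕜 => NormedSpace.exp A) := by
  let _ : NormedRing (Matrix n n 𝕜) := Matrix.linftyOpNormedRing
  let _ : NormedAlgebra 𝕜 (Matrix n n 𝕜) := Matrix.linftyOpNormedAlgebra
  let _ : NormedAlgebra ℚ (Matrix n n 𝕜) := Matrix.linftyOpNormedAlgebra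
  exact @NormedSpace.exp_continuous _ _ _ (FiniteDimensional.complete 𝕜 _)

noncomputable def evolvedState (H ρ : Matrix n n ℂ) (t : ℝ) : Matrix n n ℂ :=
  NormedSpace.exp ((-(Complex.I * (t : ℂ))) • H) * ρ * NormedSpace.exp ((Complex.I * (t : ℂ)) • H)

theorem continuous_evolvedState (H ρ : Matrix n n ℂ) : Continuous (evolvedState H ρ) := by
  have hexp {g : ℝ → ℂ} (hg : Continuous g) : Continuous fun t => NormedSpace.exp (g t • H) :=
    Matrix.continuous_exp.comp (hg.smul continuous_const)
  exact ((hexp (by fun_prop)).matrix_mul continuous_const).matrix_mul (hexp (by fun_prop))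

theorem norm_evolvedState_le {H : Matrix n n ℂ} (hH : H.IsHermitian) (ρ : Matrix n n ℂ) (t : ℝ) :
    ‖evolvedState H ρ t‖ ≤ Fintype.card n ^ 2 * ‖ρ‖ := by
  have hU : NormedSpace.exp ((-(Complex.I * (t : ℂ))) • H) ∈ Matrix.unitaryGroup n ℂ := by
    simpa using hH.exp_I_smul_mem_unitaryGroup (-t)
  have hV := hH.exp_I_smul_mem_unitaryGroup t
  calc ‖evolvedState H ρ t‖
      ≤ Fintype.card n * ((Fintype.card n * (1 * ‖ρ‖)) * 1) := by
        refine (Matrix.norm_mul_le_card_mul _ _).trans ?_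
        gcongr
        · exact (Matrix.norm_mul_le_card_mul _ _).trans
            (by gcongr; exact norm_le_one_of_mem_unitaryGroup hU)
        · exact norm_le_one_of_mem_unitaryGroup hV
    _ = Fintype.card n ^ 2 * ‖ρ‖ := by ring

end MatrixAnalysis

section MatrixIntegral

variable {n 𝕜 : Type*} [Fintype n] [RCLike 𝕜]

-- The sup norm on matrices is only a local instance, and instance search does not see through
-- its topology to `Matrix`'s own; these two instances are what `Integrable` on matrices needs.
noncomputable instance : TopologicalSpace.PseudoMetrizableSpace (Matrix n n 𝕜) :=
  PseudoEMetricSpace.pseudoMetrizableSpace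

noncomputable instance : ContinuousENorm (Matrix n n 𝕜) :=
  SeminormedAddGroup.toContinuousENorm

theorem Matrix.trace_mul_integral {α : Type*} [MeasurableSpace α] {μ : Measure α}
    (A : Matrix n n 𝕜) {F : α → Matrix n n 𝕜} (hF : Integrable F μ) :
    (A * ∫ q, F q ∂μ).trace = ∫ q, (A * F q).trace ∂μ :=
  ((Matrix.traceLinearMap n 𝕜 𝕜 ∘ₗ LinearMap.mulLeft 𝕜 A).toContinuousLinearMap.integral_comp_comm
    hF).symm

end MatrixIntegral

theorem stmt_19_general (n : ℕ) (H ρ : Matrix (Fin n) (Fin n) ℂ)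
    (hH : H.IsHermitian)
    (W : ℝ × ℝ → ℝ) (hWmeas : Measurable W)
    (hWint : Integrable (fun q : ℝ × ℝ => |W q| * (1 + |q.1|)))
    (hWnorm : (∫ q : ℝ × ℝ, W q) = 1)
    (m : ℝ) (hm : m = ∫ q : ℝ × ℝ, q.1 * W q)
    (lam : ℝ → ℂ)
    (hlam : lam = fun (s : ℝ) => ∫ q : ℝ × ℝ, Complex.exp (Complex.I * (q.1 : ℂ) * (s : ℂ)) * (W q : ℂ))
    (N : ℝ → Matrix (Fin n) (Fin n) ℂ)
    (hN : N = fun (s : ℝ) => ∫ q : ℝ × ℝ,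
        (Complex.exp (Complex.I * (q.1 : ℂ) * (s : ℂ)) * (W q : ℂ)) •
          (NormedSpace.exp ((-(Complex.I * (q.2 : ℂ))) • H) * ρ *
            NormedSpace.exp ((Complex.I * (q.2 : ℂ)) • H)))
    (ξ : ℝ → Matrix (Fin n) (Fin n) ℂ) (hξ : ξ = fun s => (lam s)⁻¹ • N s)
    (D : Matrix (Fin n) (Fin n) ℂ)
    (hD : D = Complex.I • ∫ q : ℝ × ℝ,
        ((q.1 - m) * W q) •
          (NormedSpace.exp ((-(Complex.I * (q.2 : ℂ))) • H) * ρ *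
            NormedSpace.exp ((Complex.I * (q.2 : ℂ)) • H)))
    (WS : Matrix (Fin n) (Fin n) ℂ) :
    HasDerivAt ξ D 0
    ∧ (-Complex.I) * (WS * D).trace
      = ∫ q : ℝ × ℝ, (((q.1 - m) * W q : ℝ) : ℂ) *
          (WS * (NormedSpace.exp ((-(Complex.I * (q.2 : ℂ))) • H) * ρ *
            NormedSpace.exp ((Complex.I * (q.2 : ℂ)) • H))).trace := by
  set M : ℝ × ℝ → Matrix (Fin n) (Fin n) ℂ := fun q => evolvedState H ρ q.2
  replace hN : N = fun s : ℝ =>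
      ∫ q, (Complex.exp (Complex.I * (q.1 : ℂ) * (s : ℂ)) * (W q : ℂ)) • M q := hN
  replace hD : D = Complex.I • ∫ q, ((q.1 - m) * W q) • M q := hD
  have hM : AEStronglyMeasurable M :=
    ((continuous_evolvedState H ρ).comp continuous_snd).aestronglyMeasurable
  have hMC (q : ℝ × ℝ) : ‖M q‖ ≤ Fintype.card (Fin n) ^ 2 * ‖ρ‖ :=
    norm_evolvedState_le hH ρ q.2
  have hW : Integrable W := .of_abs_mul_one_add_abs hWmeas.aestronglyMeasurable hWint
  have hEW : Integrable fun q : ℝ × ℝ => q.1 * W q :=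
    .mul_of_abs_mul_one_add_abs (measurable_fst.mul hWmeas).aestronglyMeasurable hWint
  have hlam' : HasDerivAt lam (Complex.I * m) 0 := by
    simpa only [Complex.ofReal_zero, mul_zero, Complex.exp_zero, one_mul, smul_eq_mul, mul_one,
      integral_complex_ofReal, hm, hlam] using hasDerivAt_integral_cexp_mul_smul
      (M := fun _ => (1 : ℂ)) measurable_fst.aestronglyMeasurable hW hEW
      aestronglyMeasurable_const (fun _ => norm_one.le) 0
  have hN' : HasDerivAt N (Complex.I • ∫ q, (q.1 * W q) • M q) 0 := by
    have h :=
      hasDerivAt_integral_cexp_mul_smul measurable_fst.aestronglyMeasurable hW hEW hM hMC 0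
    simp only [Complex.ofReal_zero, mul_zero, Complex.exp_zero, one_mul, Complex.coe_smul] at h
    rw [hN]
    exact h
  have hlam0 : lam 0 = 1 := by simp [hlam, integral_complex_ofReal, hWnorm]
  have hN0 : N 0 = ∫ q, W q • M q := by simp [hN, Complex.coe_smul]
  have hbdd {r : ℝ × ℝ → ℝ} (hr : Integrable r) : Integrable fun q => r q • M q :=
    hr.smul_bdd _ hM (ae_of_all _ hMC)
  subst hξ
  refine ⟨(hlam'.inv_smul_of_eq_one hlam0 hN').congr_deriv ?_, ?_⟩
  · rw [hD, integral_sub_mul_smul m (hbdd hEW) (hbdd hW), hN0]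
    module
  · have hDW : Integrable fun q : ℝ × ℝ => q.1 * W q - m * W q := hEW.sub (hW.const_mul m)
    simp only [← sub_mul] at hDW
    rw [hD, Matrix.mul_smul, trace_smul, smul_eq_mul, ← mul_assoc, neg_mul, Complex.I_mul_I,
      neg_neg, one_mul, Matrix.trace_mul_integral WS (hbdd hDW)]
    simp only [Matrix.mul_smul, trace_smul, Complex.real_smul]
    rfl

/-- Differentiability of the effective operator `ξ(s) = N(s)/λ(s)` at `s = 0`,
with `ξ′(0) = i ∫∫ (E - m) W(E,t) e^{-iHt} ρ e^{iHt} dE dt`, and the resulting expression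
`-i Tr[W_S ξ′(0)] = ∫∫ (E - m) W(E,t) Tr[W_S e^{-iHt} ρ e^{iHt}] dE dt` for the F-term. -/
theorem stmt_19 (n : ℕ) (H ρ : Matrix (Fin n) (Fin n) ℂ)
    (hH : H.IsHermitian) (hρ : ρ.PosSemidef) (hρtr : ρ.trace = 1)
    (W : ℝ × ℝ → ℝ) (hWmeas : Measurable W)
    (hWint : Integrable (fun q : ℝ × ℝ => |W q| * (1 + |q.1|)))
    (hWnorm : (∫ q : ℝ × ℝ, W q) = 1)
    (m : ℝ) (hm : m = ∫ q : ℝ × ℝ, q.1 * W q)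
    (lam : ℝ → ℂ)
    (hlam : lam = fun (s : ℝ) => ∫ q : ℝ × ℝ, Complex.exp (Complex.I * (q.1 : ℂ) * (s : ℂ)) * (W q : ℂ))
    (N : ℝ → Matrix (Fin n) (Fin n) ℂ)
    (hN : N = fun (s : ℝ) => ∫ q : ℝ × ℝ,
        (Complex.exp (Complex.I * (q.1 : ℂ) * (s : ℂ)) * (W q : ℂ)) •
          (NormedSpace.exp ((-(Complex.I * (q.2 : ℂ))) • H) * ρ *
            NormedSpace.exp ((Complex.I * (q.2 : ℂ)) • H)))
    (ξ : ℝ → Matrix (Fin n) (Fin n) ℂ) (hξ : ξ = fun s => (lam s)⁻¹ • N s)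
    (D : Matrix (Fin n) (Fin n) ℂ)
    (hD : D = Complex.I • ∫ q : ℝ × ℝ,
        ((q.1 - m) * W q) •
          (NormedSpace.exp ((-(Complex.I * (q.2 : ℂ))) • H) * ρ *
            NormedSpace.exp ((Complex.I * (q.2 : ℂ)) • H)))
    (WS : Matrix (Fin n) (Fin n) ℂ) (hWS : WS.IsHermitian) :
    HasDerivAt ξ D 0
    ∧ (-Complex.I) * (WS * D).trace
      = ∫ q : ℝ × ℝ, (((q.1 - m) * W q : ℝ) : ℂ) *
          (WS * (NormedSpace.exp ((-(Complex.I * (q.2 : ℂ))) • H) * ρ *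
            NormedSpace.exp ((Complex.I * (q.2 : ℂ)) • H))).trace :=
  stmt_19_general n H ρ hH W hWmeas hWint hWnorm m hm lam hlam N hN ξ hξ D hD WS
end
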